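/- arXiv:1003.0564 — 4 statements merged into one kernel-verified Lean document; each statement's English description precedes it below -/
import Mathlib

section
/- Let A be an n×n generalized Cartan matrix. Then A is symmetrizable if and only if for every k with 2 ≤ k ≤ n and every sequence of indices i_1, …, i_k with i_s ≠ i_{s+1} for all s (indices taken mod k), one has A(i_1,i_2)·A(i_2,i_3)·…·A(i_k,i_1) = A(i_2,i_1)·A(i_3,i_2)·…·A(i_1,i_k). -/
/-- An integer matrix is a generalized Cartan matrix (GCM). -/
def IsGCM {ι : Type} (A : Matrix ι ι ℤ) : Prop :=
  (∀ i, A i i = 2) ∧ (∀ i j, i ≠ j → A i j ≤ 0) ∧ (∀ i j, A i j = 0 → A j i = 0)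

/-- A GCM is symmetrizable if there are nonzero rationals `d i` with
`d i * A i j = d j * A j i` for all `i, j`. -/
def IsSymmetrizable {ι : Type} (A : Matrix ι ι ℤ) : Prop :=
  ∃ d : ι → ℚ, (∀ i, d i ≠ 0) ∧ ∀ i j, d i * (A i j : ℚ) = d j * (A j i : ℚ)

/-!
Give the edge `i → j` of the graph with `A i j ≠ 0` the weight `A i j / A j i`. For a symmetrizer
`d` this weight is `d j / d i`, so it telescopes to one around every cycle, which is Kac's
condition. Conversely, Kac's condition says that closed walks without repeated vertices have
weight one. Cutting such loops out of an arbitrary closed walk (`SimpleGraph.Walk.bypass`) shows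
that every closed walk has weight one, so the weight of a walk depends only on its endpoints, and
the weight of a walk from a base point of each connected component is a symmetrizer.
-/

def Matrix.KacCondition {ι M : Type*} [Fintype ι] [CommMonoid M] (A : Matrix ι ι M) : Prop :=
  ∀ m : ℕ, m + 2 ≤ Fintype.card ι → ∀ i : Fin (m + 2) → ι,
    (∀ s, i s ≠ i (s + 1)) → ∏ s, A (i s) (i (s + 1)) = ∏ s, A (i (s + 1)) (i s)

namespace SimpleGraph.Walk

variable {V M : Type*} {G : SimpleGraph V}

section CommMonoid

variable [CommMonoid M] (r : V → V → M)

def weight {u v : V} (p : G.Walk u v) : M :=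
  (p.darts.map fun d => r d.fst d.snd).prod

variable {r}

@[simp]
lemma weight_nil {u : V} : (nil : G.Walk u u).weight r = 1 := rfl

@[simp]
lemma weight_cons {u v w : V} (h : G.Adj u v) (p : G.Walk v w) :
    (cons h p).weight r = r u v * p.weight r := by
  simp [weight]

lemma weight_append {u v w : V} (p : G.Walk u v) (q : G.Walk v w) :
    (p.append q).weight r = p.weight r * q.weight r := by
  simp [weight]

lemma weight_concat {u v w : V} (p : G.Walk u v) (h : G.Adj v w) :
    (p.concat h).weight r = p.weight r * r v w := by
  simp [weight]

@[simp]
lemma weight_copy {u v u' v' : V} (p : G.Walk u v) (hu : u = u') (hv : v = v') :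
    (p.copy hu hv).weight r = p.weight r := by
  simp [weight]

lemma weight_eq_prod_range {u v : V} (p : G.Walk u v) :
    p.weight r = ∏ s ∈ Finset.range p.length, r (p.getVert s) (p.getVert (s + 1)) := by
  induction p with
  | nil => simp
  | cons h p ih => simp [Finset.prod_range_succ', ih, mul_comm]

-- Every loop that `bypass` cuts out is a closed walk without repeated vertices.
lemma weight_bypass [DecidableEq V]
    (hcyc : ∀ u (c : G.Walk u u), c.support.tail.Nodup → c.weight r = 1) {u v : V}
    (p : G.Walk u v) : p.bypass.weight r = p.weight r := by
  induction p with
  | nil => rfl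
  | @cons u w v h p ih =>
    rw [bypass]
    split_ifs with hs
    · have hloop : (cons h (p.bypass.takeUntil u hs)).weight r = 1 :=
        hcyc u _ (p.bypass_isPath.takeUntil hs).support_nodup
      calc (p.bypass.dropUntil u hs).weight r
          = (cons h (p.bypass.takeUntil u hs)).weight r * (p.bypass.dropUntil u hs).weight r := by
            rw [hloop, one_mul]
        _ = (cons h p).weight r := by
            rw [weight_cons, mul_assoc, ← weight_append, take_spec, ih, weight_cons]
    · rw [weight_cons, weight_cons, ih]

lemma weight_eq_one_of_closed
    (hcyc : ∀ u (c : G.Walk u u), c.support.tail.Nodup → c.weight r = 1) {u : V}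
    (c : G.Walk u u) : c.weight r = 1 := by
  classical
  rw [← weight_bypass hcyc, (isPath_iff_nil.mp c.bypass_isPath).eq_nil, weight_nil]

end CommMonoid

section CommGroupWithZero

variable [CommGroupWithZero M] {r : V → V → M}

lemma weight_reverse (hr : ∀ a b, r b a = (r a b)⁻¹) {u v : V} (p : G.Walk u v) :
    p.reverse.weight r = (p.weight r)⁻¹ := by
  induction p with
  | nil => simp
  | cons h p ih =>
    rw [reverse_cons, weight_append, ih, weight_cons, weight_nil, mul_one, hr, weight_cons,
      mul_inv, mul_comm]

lemma weight_ne_zero (hr₀ : ∀ a b, G.Adj a b → r a b ≠ 0) {u v : V} (p : G.Walk u v) :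
    p.weight r ≠ 0 := by
  induction p with
  | nil => simp
  | cons h p ih => simpa using ⟨hr₀ _ _ h, ih⟩

lemma weight_eq_of_closed (hr : ∀ a b, r b a = (r a b)⁻¹) (hr₀ : ∀ a b, G.Adj a b → r a b ≠ 0)
    (hcyc : ∀ u (c : G.Walk u u), c.support.tail.Nodup → c.weight r = 1) {u v : V}
    (p q : G.Walk u v) : p.weight r = q.weight r := by
  have h := weight_eq_one_of_closed hcyc (p.append q.reverse)
  rwa [weight_append, weight_reverse hr, mul_inv_eq_one₀ (weight_ne_zero hr₀ q)] at h

end CommGroupWithZero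

lemma getVert_val_add_one {u : V} (c : G.Walk u u) {m : ℕ} (hc : c.length = m + 1)
    (s : Fin (m + 1)) : c.getVert ↑(s + 1) = c.getVert (s + 1) := by
  rw [Fin.val_add_one]
  split_ifs with hs
  · rw [hs, Fin.val_last, ← hc, getVert_length, getVert_zero]
  · rfl

lemma prod_range_getVert_eq_of_kacCondition {ι : Type*} [Fintype ι] [CommMonoid M]
    {A : Matrix ι ι M} {G : SimpleGraph ι} (hA : A.KacCondition) {u : ι} (c : G.Walk u u)
    (hc : c.length ≤ Fintype.card ι) :
    ∏ s ∈ Finset.range c.length, A (c.getVert s) (c.getVert (s + 1)) =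
      ∏ s ∈ Finset.range c.length, A (c.getVert (s + 1)) (c.getVert s) := by
  obtain h | h | ⟨m, hm⟩ : c.length = 0 ∨ c.length = 1 ∨ ∃ m, c.length = m + 2 := by
    rcases c.length with _ | _ | m <;> simp
  · simp [h]
  · have h1 : c.getVert 1 = u := h ▸ c.getVert_length
    simp [h, h1]
  · have key := hA m (hm ▸ hc) (fun s => c.getVert s) fun s => by
      rw [c.getVert_val_add_one hm]
      exact G.ne_of_adj (c.adj_getVert_succ (by omega))
    simpa only [c.getVert_val_add_one hm, Fin.prod_univ_eq_prod_range
      (fun s => A (c.getVert s) (c.getVert (s + 1))),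
      Fin.prod_univ_eq_prod_range (fun s => A (c.getVert (s + 1)) (c.getVert s)), hm] using key

end SimpleGraph.Walk

namespace SimpleGraph

theorem exists_potential_of_weight_closed {V M : Type*} {G : SimpleGraph V} [CommGroupWithZero M]
    {r : V → V → M} (hr : ∀ a b, r b a = (r a b)⁻¹) (hr₀ : ∀ a b, G.Adj a b → r a b ≠ 0)
    (hcyc : ∀ u (c : G.Walk u u), c.support.tail.Nodup → c.weight r = 1) :
    ∃ d : V → M, (∀ v, d v ≠ 0) ∧ ∀ a b, G.Adj a b → d b = d a * r a b := by
  -- `d v` is the weight of a walk to `v` from a base point chosen in each component.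
  have hroot (v : V) : G.Reachable (G.connectedComponentMk v).out v :=
    ConnectedComponent.exact (G.connectedComponentMk v).out_eq
  refine ⟨fun v => (hroot v).some.weight r, fun v => Walk.weight_ne_zero hr₀ _, fun a b h => ?_⟩
  have hab : G.connectedComponentMk a = G.connectedComponentMk b :=
    ConnectedComponent.connectedComponentMk_eq_of_adj h
  change (hroot b).some.weight r = (hroot a).some.weight r * r a b
  rw [← Walk.weight_concat, Walk.weight_eq_of_closed hr hr₀ hcyc (hroot b).some
    (((hroot a).some.concat h).copy (by rw [hab]) rfl), Walk.weight_copy]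

end SimpleGraph

-- Both entries are required to be nonzero so that adjacency is symmetric for every matrix.
def cartanGraph {ι R : Type*} [Zero R] (A : Matrix ι ι R) : SimpleGraph ι where
  Adj i j := i ≠ j ∧ A i j ≠ 0 ∧ A j i ≠ 0
  symm := ⟨fun _ _ h => ⟨h.1.symm, h.2.2, h.2.1⟩⟩
  loopless := ⟨fun _ h => h.1 rfl⟩

lemma cartanGraph_adj {ι R : Type*} [Zero R] {A : Matrix ι ι R} {i j : ι} :
    (cartanGraph A).Adj i j ↔ i ≠ j ∧ A i j ≠ 0 ∧ A j i ≠ 0 := Iff.rfl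

lemma cartanGraph_weight_eq_one {ι : Type*} [Fintype ι] {A : Matrix ι ι ℤ}
    (hA : A.KacCondition) {u : ι} (c : (cartanGraph A).Walk u u) (hc : c.support.tail.Nodup) :
    c.weight (fun i j => (A i j : ℚ) / A j i) = 1 := by
  have hlen : c.length ≤ Fintype.card ι := by
    simpa [c.length_support] using hc.length_le_card
  have hne : ∏ s ∈ Finset.range c.length, (A (c.getVert (s + 1)) (c.getVert s) : ℚ) ≠ 0 :=
    Finset.prod_ne_zero_iff.mpr fun s hs =>
      Int.cast_ne_zero.mpr (cartanGraph_adj.mp (c.adj_getVert_succ (Finset.mem_range.mp hs))).2.2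
  rw [SimpleGraph.Walk.weight_eq_prod_range, Finset.prod_div_distrib, div_eq_one_iff_eq hne]
  exact_mod_cast c.prod_range_getVert_eq_of_kacCondition hA hlen

section Symmetrizable

variable {ι : Type} {A : Matrix ι ι ℤ}

lemma isSymmetrizable_of_kacCondition [Fintype ι] (hA₀ : ∀ i j, A i j = 0 → A j i = 0)
    (hA : A.KacCondition) : IsSymmetrizable A := by
  obtain ⟨d, hd₀, hd⟩ := (cartanGraph A).exists_potential_of_weight_closed
    (r := fun i j => (A i j : ℚ) / A j i) (fun _ _ => (inv_div _ _).symm)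
    (fun _ _ h => div_ne_zero (Int.cast_ne_zero.mpr h.2.1) (Int.cast_ne_zero.mpr h.2.2))
    (fun _ c hc => cartanGraph_weight_eq_one hA c hc)
  refine ⟨d, hd₀, fun i j => ?_⟩
  by_cases hij : (cartanGraph A).Adj i j
  · have hji : (A j i : ℚ) ≠ 0 := Int.cast_ne_zero.mpr hij.2.2
    rw [hd i j hij]
    field_simp
  · obtain rfl | hij' := eq_or_ne i j
    · rfl
    have h0 : A i j = 0 ∨ A j i = 0 := by
      simpa only [cartanGraph_adj, ne_eq, hij', not_false_eq_true, true_and, not_and_or,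
        not_not] using hij
    obtain h | h := h0
    · simp [h, hA₀ i j h]
    · simp [h, hA₀ j i h]

lemma IsSymmetrizable.prod_cycle_eq (hA : IsSymmetrizable A) {k : ℕ} [NeZero k]
    (i : Fin k → ι) : ∏ s, A (i s) (i (s + 1)) = ∏ s, A (i (s + 1)) (i s) := by
  obtain ⟨d, hd₀, hd⟩ := hA
  have hshift : ∏ s, d (i (s + 1)) = ∏ s, d (i s) :=
    Fintype.prod_equiv (Equiv.addRight 1) _ _ fun _ => rfl
  have hd_prod : ∏ s, d (i s) ≠ 0 := Finset.prod_ne_zero_iff.mpr fun s _ => hd₀ (i s)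
  have key : (∏ s, d (i s)) * ∏ s, (A (i s) (i (s + 1)) : ℚ) =
      (∏ s, d (i s)) * ∏ s, (A (i (s + 1)) (i s) : ℚ) := by
    nth_rw 2 [← hshift]
    rw [← Finset.prod_mul_distrib, ← Finset.prod_mul_distrib]
    exact Finset.prod_congr rfl fun s _ => hd _ _
  exact_mod_cast mul_left_cancel₀ hd_prod key

end Symmetrizable

/-- Kac's criterion: a GCM is symmetrizable iff for every `k` with `2 ≤ k ≤ n` (here
`k = m + 2`) and every sequence `i : Fin k → Fin n` with `i s ≠ i (s+1)` (indices mod `k`),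
`A (i 1) (i 2) ⋯ A (i k) (i 1) = A (i 2) (i 1) ⋯ A (i 1) (i k)`. -/
theorem symmetrizable_iff_kac_criterion {n : ℕ} (A : Matrix (Fin n) (Fin n) ℤ)
    (hA : IsGCM A) :
    IsSymmetrizable A ↔
      ∀ m : ℕ, m + 2 ≤ n → ∀ i : Fin (m + 2) → Fin n,
        (∀ s, i s ≠ i (s + 1)) →
        (∏ s, A (i s) (i (s + 1))) = ∏ s, A (i (s + 1)) (i s) := by
  refine ⟨fun h _ _ i _ => h.prod_cycle_eq i, fun h => ?_⟩
  exact isSymmetrizable_of_kacCondition hA.2.2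
    (by simpa only [Matrix.KacCondition, Fintype.card_fin] using h)
end

section
/- Let A be a symmetrizable hyperbolic generalized Cartan matrix of rank n ≥ 3, and let d_1, …, d_n be positive rational numbers with d_i · A i j = d_j · A j i for all i, j. Then the set {d_1, …, d_n} has at most 4 distinct elements (equivalently, the real roots of the corresponding root system have at most 4 distinct lengths). -/
/-- The Dynkin diagram graph of a GCM: `i` adjacent to `j` iff `i ≠ j` and `A i j ≠ 0`.
(For a GCM, `A i j ≠ 0 ↔ A j i ≠ 0`, so adjacency is stated symmetrically.) -/
def dynkinGraph {ι : Type} (A : Matrix ι ι ℤ) : SimpleGraph ι where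
  Adj i j := i ≠ j ∧ A i j ≠ 0 ∧ A j i ≠ 0
  symm := ⟨by intro i j h; exact ⟨h.1.symm, h.2.2, h.2.1⟩⟩
  loopless := ⟨by intro i h; exact h.1 rfl⟩

/-- The principal submatrix of `A` with rows and columns in `S`. -/
def matSub {ι : Type} (A : Matrix ι ι ℤ) (S : Finset ι) : Matrix S S ℤ :=
  fun i j => A i.1 j.1

/-- A GCM is of finite type if all of its principal minors are positive. -/
def IsFiniteType {ι : Type} [Fintype ι] [DecidableEq ι] (A : Matrix ι ι ℤ) : Prop :=
  ∀ S : Finset ι, 0 < (matSub A S).det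

/-- An indecomposable GCM is of affine type if its determinant is `0` and all proper
principal minors are positive (i.e. every proper principal submatrix is of finite type). -/
def IsAffineType {ι : Type} [Fintype ι] [DecidableEq ι] (A : Matrix ι ι ℤ) : Prop :=
  (dynkinGraph A).Connected ∧ A.det = 0 ∧
    ∀ S : Finset ι, S ≠ Finset.univ → 0 < (matSub A S).det

/-- An indecomposable GCM of rank at least 3 is hyperbolic if it is of neither finite nor
affine type, but every proper connected principal submatrix is of finite or affine type. -/
def IsHyperbolic {ι : Type} [Fintype ι] [DecidableEq ι] (A : Matrix ι ι ℤ) : Prop :=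
  3 ≤ Fintype.card ι ∧ (dynkinGraph A).Connected ∧
  ¬ IsFiniteType A ∧ ¬ IsAffineType A ∧
  ∀ S : Finset ι, S ≠ Finset.univ →
    ((dynkinGraph A).induce (S : Set ι)).Connected →
    (IsFiniteType (matSub A S) ∨ IsAffineType (matSub A S))

/-- A hyperbolic GCM is of compact hyperbolic type if every proper connected principal
submatrix is of finite type. -/
def IsCompactHyperbolic {ι : Type} [Fintype ι] [DecidableEq ι] (A : Matrix ι ι ℤ) : Prop :=
  IsHyperbolic A ∧ ∀ S : Finset ι, S ≠ Finset.univ →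
    ((dynkinGraph A).induce (S : Set ι)).Connected → IsFiniteType (matSub A S)

/-!
Once `n ≥ 5`, a connected subdiagram leaving out at least two vertices has positive
determinant: adding a neighbour gives a proper connected subdiagram, of finite or affine type,
of which it is a proper principal submatrix. Applied to three vertices, this bounds every bond
by `A i j * A j i ≤ 2`, so along an edge `d` is multiplied by `1`, or by `2^{±1}` across a double
bond. On a shortest path the first two double bonds bound a chordless chain of affine type,
whose determinant vanishes; a fourth double bond would leave two path vertices outside it. So
any two values of `d` differ by a factor `2^k` with `|k| ≤ 3`, and all of them lie in
`{d₀, 2 d₀, 4 d₀, 8 d₀}` for the least value `d₀`.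
-/

open Finset

section PrincipalSubmatrix

variable {ι κ : Type} [DecidableEq ι] [Fintype κ] [DecidableEq κ]

lemma det_matSub_eq_det_submatrix (A : Matrix ι ι ℤ) (S : Finset ι) (g : κ → ι)
    (hg : Function.Injective g) (hS : Set.range g = S) :
    (matSub A S).det = (A.submatrix g g).det := by
  let e : κ ≃ S := (Equiv.ofInjective g hg).trans (Equiv.setCongr hS)
  rw [show A.submatrix g g = (matSub A S).submatrix e e from rfl,
    Matrix.det_submatrix_equiv_self]

lemma det_matSub_matSub (A : Matrix ι ι ℤ) {S T : Finset ι} (hTS : T ⊆ S) :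
    (matSub (matSub A S) (T.subtype (· ∈ S))).det = (matSub A T).det := by
  refine (det_matSub_eq_det_submatrix A T (fun x : T.subtype (· ∈ S) ↦ x.1.1)
    (fun x y h ↦ Subtype.ext (Subtype.ext h)) ?_).symm
  ext x
  simp only [Set.mem_range, Subtype.exists, mem_subtype, mem_coe]
  exact ⟨fun ⟨_, _, hx, rfl⟩ ↦ hx, fun hx ↦ ⟨x, hTS hx, hx, rfl⟩⟩

lemma det_matSub_image_range (A : Matrix ι ι ℤ) (f : ℕ → ι) (k : ℕ)
    (hf : Set.InjOn f (range k)) :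
    (matSub A ((range k).image f)).det =
      (A.submatrix (fun s : Fin k ↦ f s) (fun s : Fin k ↦ f s)).det := by
  refine det_matSub_eq_det_submatrix A _ _ (fun s t h ↦ Fin.ext (hf (by simp) (by simp) h)) ?_
  ext x
  simp [Fin.exists_iff]

lemma det_matSub_three (A : Matrix ι ι ℤ) {a b c : ι} (hab : a ≠ b) (hac : a ≠ c) (hbc : b ≠ c) :
    (matSub A {a, b, c}).det = A a a * A b b * A c c - A a a * A b c * A c b
      - A a b * A b a * A c c + A a b * A b c * A c a + A a c * A b a * A c b
      - A a c * A b b * A c a := by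
  rw [det_matSub_eq_det_submatrix A _ ![a, b, c] ?_ (by ext; simp; tauto), Matrix.det_fin_three]
  · rfl
  · intro x y h
    fin_cases x <;> fin_cases y <;> simp_all [eq_comm]

end PrincipalSubmatrix

namespace SimpleGraph

variable {V : Type} {G : SimpleGraph V}

lemma connected_induce_insert {T : Set V} {x y : V} (hT : (G.induce T).Connected) (hy : y ∈ T)
    (hxy : G.Adj x y) : (G.induce (insert x T)).Connected := by
  rw [Set.insert_eq]
  refine G.connected_induce_union ?_ hT.preconnected (Set.mem_singleton x) hy hxy
  rw [induce_singleton_eq_top]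
  exact Preconnected.of_subsingleton

lemma connected_induce_image_range [DecidableEq V] {f : ℕ → V} {k : ℕ}
    (hf : ∀ t < k, G.Adj (f t) (f (t + 1))) :
    (G.induce ((range (k + 1)).image f : Set V)).Connected := by
  induction k with
  | zero =>
    rw [zero_add, range_one, image_singleton, coe_singleton, induce_singleton_eq_top]
    exact connected_top
  | succ k ih =>
    rw [range_add_one, image_insert, coe_insert]
    exact connected_induce_insert (ih fun t ht ↦ hf t (by omega))
      (mem_image_of_mem f (self_mem_range_succ k)) (hf k (by omega)).symm

lemma Walk.dist_getVert_getVert {u v : V} (p : G.Walk u v) (hp : p.length = G.dist u v)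
    {a b : ℕ} (hab : a ≤ b) (hb : b ≤ p.length) :
    G.dist (p.getVert a) (p.getVert b) = b - a := by
  have hsub := (p.drop a).isSubwalk_take (b - a) |>.trans (p.isSubwalk_drop a)
  have := length_eq_dist_of_subwalk hp hsub
  rw [take_length, drop_length, drop_getVert, Nat.add_sub_cancel' hab] at this
  omega

lemma Walk.not_adj_getVert_getVert {u v : V} (p : G.Walk u v) (hp : p.length = G.dist u v)
    {a b : ℕ} (hab : a + 2 ≤ b) (hb : b ≤ p.length) : ¬ G.Adj (p.getVert a) (p.getVert b) := by
  intro h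
  have := p.dist_getVert_getVert hp (by omega : a ≤ b) hb
  rw [dist_eq_one_iff_adj.mpr h] at this
  omega

end SimpleGraph

lemma Finset.exists_consecutive_pair_of_four_le_card {D : Finset ℕ} (hD : 4 ≤ #D) :
    ∃ a ∈ D, ∃ b ∈ D, a < b ∧ (∀ t ∈ D, a < t → b ≤ t) ∧ ∃ c ∈ D, b + 2 ≤ c := by
  set q := D.orderEmbOfFin rfl
  have hq := q.strictMono
  refine ⟨q ⟨0, by omega⟩, D.orderEmbOfFin_mem rfl _, q ⟨1, by omega⟩,
    D.orderEmbOfFin_mem rfl _, hq (by simp), fun t ht hat ↦ ?_, q ⟨3, by omega⟩,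
    D.orderEmbOfFin_mem rfl _, ?_⟩
  · obtain ⟨k, rfl⟩ : t ∈ Set.range q := by rw [range_orderEmbOfFin]; exact ht
    refine q.monotone (Fin.mk_le_of_le_val ?_)
    by_contra! hk
    exact hat.ne (congrArg q (Fin.ext (by simp; omega)))
  · have h₁₂ := hq (show (⟨1, by omega⟩ : Fin #D) < ⟨2, by omega⟩ by simp)
    have h₂₃ := hq (show (⟨2, by omega⟩ : Fin #D) < ⟨3, by omega⟩ by simp)
    omega

section GCM

variable {ι : Type} {A : Matrix ι ι ℤ}

lemma IsGCM.neg_of_adj (hA : IsGCM A) {i j : ι} (hij : (dynkinGraph A).Adj i j) : A i j < 0 :=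
  lt_of_le_of_ne (hA.2.1 i j hij.1) hij.2.1

lemma IsGCM.one_le_mul_of_adj (hA : IsGCM A) {i j : ι} (hij : (dynkinGraph A).Adj i j) :
    1 ≤ A i j * A j i := by
  have := hA.neg_of_adj hij
  have := hA.neg_of_adj hij.symm
  nlinarith

lemma IsGCM.mul_transpose_nonneg (hA : IsGCM A) (i j : ι) : 0 ≤ A i j * A j i := by
  by_cases h : i = j
  · simp [h, hA.1]
  · exact mul_nonneg_of_nonpos_of_nonpos (hA.2.1 i j h) (hA.2.1 j i (Ne.symm h))

lemma IsGCM.eq_zero_of_not_adj (hA : IsGCM A) {i j : ι} (hne : i ≠ j)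
    (hij : ¬ (dynkinGraph A).Adj i j) : A i j = 0 := by
  by_contra h
  exact hij ⟨hne, h, fun h' ↦ h (hA.2.2 j i h')⟩

lemma IsGCM.entries_of_adj_of_mul_le_two (hA : IsGCM A) {i j : ι}
    (hij : (dynkinGraph A).Adj i j) (hle : A i j * A j i ≤ 2) :
    (A i j = -1 ∧ A j i = -1) ∨ (A i j = -1 ∧ A j i = -2) ∨ (A i j = -2 ∧ A j i = -1) := by
  have h₁ := hA.neg_of_adj hij
  have h₂ := hA.neg_of_adj hij.symm
  have : -2 ≤ A i j := by nlinarith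
  have : -2 ≤ A j i := by nlinarith
  have : ¬ (A i j = -2 ∧ A j i = -2) := by rintro ⟨h, h'⟩; simp [h, h'] at hle
  omega

lemma IsGCM.det_matSub_three_nonpos [DecidableEq ι] (hA : IsGCM A) {a b c : ι} (hab : a ≠ b)
    (hac : a ≠ c) (hbc : b ≠ c) (hbc3 : 3 ≤ A b c * A c b)
    (ha : 1 ≤ A a b * A b a + A a c * A c a) : (matSub A {a, b, c}).det ≤ 0 := by
  rw [det_matSub_three A hab hac hbc, hA.1, hA.1, hA.1]
  have hab' := hA.2.1 a b hab
  have hba := hA.2.1 b a hab.symm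
  have hac' := hA.2.1 a c hac
  have hca := hA.2.1 c a hac.symm
  have hcyc₁ : A a b * A b c * A c a ≤ 0 :=
    mul_nonpos_of_nonneg_of_nonpos (mul_nonneg_of_nonpos_of_nonpos hab' (hA.2.1 b c hbc)) hca
  have hcyc₂ : A a c * A b a * A c b ≤ 0 :=
    mul_nonpos_of_nonneg_of_nonpos (mul_nonneg_of_nonpos_of_nonpos hac' hba)
      (hA.2.1 c b hbc.symm)
  nlinarith [hA.mul_transpose_nonneg a b, hA.mul_transpose_nonneg a c]

end GCM

section Symmetrizer

variable {ι : Type} {A : Matrix ι ι ℤ} {d : ι → ℚ}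

lemma IsGCM.exists_zpow_of_adj (hA : IsGCM A) (hdA : ∀ i j, d i * (A i j : ℚ) = d j * (A j i : ℚ))
    {i j : ι} (hij : (dynkinGraph A).Adj i j) (hle : A i j * A j i ≤ 2) :
    ∃ ε : ℤ, d j = d i * 2 ^ ε ∧ |ε| ≤ if A i j * A j i = 2 then 1 else 0 := by
  have h := hdA i j
  rcases hA.entries_of_adj_of_mul_le_two hij hle with ⟨h₁, h₂⟩ | ⟨h₁, h₂⟩ | ⟨h₁, h₂⟩ <;>
    rw [h₁, h₂] at h ⊢ <;> push_cast at h
  · exact ⟨0, by rw [zpow_zero, mul_one]; linarith, by simp⟩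
  · exact ⟨-1, by rw [zpow_neg_one]; linarith, by simp⟩
  · exact ⟨1, by rw [zpow_one]; linarith, by simp⟩

lemma IsGCM.exists_zpow_of_chain (hA : IsGCM A)
    (hdA : ∀ i j, d i * (A i j : ℚ) = d j * (A j i : ℚ))
    (hprod : ∀ i j, (dynkinGraph A).Adj i j → A i j * A j i ≤ 2)
    {f : ℕ → ι} {L : ℕ} (hf : ∀ t < L, (dynkinGraph A).Adj (f t) (f (t + 1))) :
    ∃ k : ℤ, d (f L) = d (f 0) * 2 ^ k ∧
      |k| ≤ #{t ∈ range L | A (f t) (f (t + 1)) * A (f (t + 1)) (f t) = 2} := by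
  induction L with
  | zero => exact ⟨0, by simp, by simp⟩
  | succ L ih =>
    obtain ⟨k, hk, hkL⟩ := ih fun t ht ↦ hf t (by omega)
    obtain ⟨ε, hε, hεL⟩ := hA.exists_zpow_of_adj hdA (hf L (by omega)) (hprod _ _ (hf L (by omega)))
    refine ⟨k + ε, by rw [hε, hk, zpow_add₀ two_ne_zero, mul_assoc], ?_⟩
    rw [card_filter, sum_range_succ, ← card_filter]
    push_cast
    have := abs_add_le k ε
    split_ifs at hεL ⊢ <;> omega

end Symmetrizer

section AffineChain

variable {ι : Type} {A : Matrix ι ι ℤ} {f : ℕ → ι} {m : ℕ}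

/-- Depending on the orientation of the two double bonds, an affine diagram of type `C̃ₗ`,
`A₂ₗ⁽²⁾` or `Dₗ₊₁⁽²⁾` with `ℓ = m + 1`. -/
structure IsDoubleEndedChain (A : Matrix ι ι ℤ) (f : ℕ → ι) (m : ℕ) : Prop where
  one_le : 1 ≤ m
  far : ∀ a b, a + 2 ≤ b → b ≤ m + 1 → A (f a) (f b) = 0 ∧ A (f b) (f a) = 0
  first : A (f 0) (f 1) * A (f 1) (f 0) = 2
  last : A (f m) (f (m + 1)) * A (f (m + 1)) (f m) = 2
  mid : ∀ t, 0 < t → t < m → A (f t) (f (t + 1)) = -1 ∧ A (f (t + 1)) (f t) = -1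

def chainNullVector (A : Matrix ι ι ℤ) (f : ℕ → ι) (m : ℕ) (s : ℕ) : ℤ :=
  if s = 0 then -A (f 0) (f 1) else if s = m + 1 then -A (f (m + 1)) (f m) else 2

lemma chainNullVector_of_ne {s : ℕ} (h₀ : s ≠ 0) (h₁ : s ≠ m + 1) :
    chainNullVector A f m s = 2 := by
  simp [chainNullVector, h₀, h₁]

namespace IsDoubleEndedChain

lemma of_walk_length_eq_dist (hA : IsGCM A)
    (hprod : ∀ i j, (dynkinGraph A).Adj i j → A i j * A j i ≤ 2)
    {u v : ι} (p : (dynkinGraph A).Walk u v) (hp : p.length = (dynkinGraph A).dist u v)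
    {b : ℕ} (hb₀ : 0 < b) (hbL : b + 1 ≤ p.length)
    (h₀ : A (p.getVert 0) (p.getVert 1) * A (p.getVert 1) (p.getVert 0) = 2)
    (hb : A (p.getVert b) (p.getVert (b + 1)) * A (p.getVert (b + 1)) (p.getVert b) = 2)
    (hsimple : ∀ t, 0 < t → t < b →
      A (p.getVert t) (p.getVert (t + 1)) * A (p.getVert (t + 1)) (p.getVert t) ≠ 2) :
    IsDoubleEndedChain A p.getVert b := by
  refine ⟨hb₀, fun a c hac hc ↦ ?_, h₀, hb, fun t ht₀ htb ↦ ?_⟩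
  · have hne : p.getVert a ≠ p.getVert c := fun h ↦ by
      have := (p.isPath_of_length_eq_dist hp).getVert_injOn (by simp; omega) (by simp; omega) h
      omega
    have hnadj := p.not_adj_getVert_getVert hp hac (by omega)
    exact ⟨hA.eq_zero_of_not_adj hne hnadj, hA.eq_zero_of_not_adj hne.symm fun h ↦ hnadj h.symm⟩
  · have hadj := p.adj_getVert_succ (i := t) (by omega)
    have := hsimple t ht₀ htb
    rcases hA.entries_of_adj_of_mul_le_two hadj (hprod _ _ hadj) with h | h | h
    · exact h
    all_goals simp [h.1, h.2] at this

lemma mul_chainNullVector_of_adj (hc : IsDoubleEndedChain A f m) {t s : ℕ} (ht₁ : 1 ≤ t)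
    (htm : t ≤ m) (hts : s + 1 = t ∨ t + 1 = s) :
    A (f t) (f s) * chainNullVector A f m s = -2 := by
  by_cases hs₀ : s = 0
  · obtain rfl : t = 1 := by omega
    simp only [chainNullVector, hs₀, if_true]
    linarith [hc.first]
  by_cases hsm : s = m + 1
  · obtain rfl : t = m := by omega
    simp only [chainNullVector, hsm, Nat.add_one_ne_zero, if_true, if_false]
    linarith [hc.last]
  rw [chainNullVector_of_ne hs₀ hsm]
  rcases hts with rfl | rfl
  · rw [(hc.mid s (by omega) (by omega)).2]; norm_num
  · rw [(hc.mid t (by omega) (by omega)).1]; norm_num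

lemma sum_range_eq_sum_subset (hc : IsDoubleEndedChain A f m) {t : ℕ} (ht : t ≤ m + 1)
    {U : Finset ℕ} (hU : U ⊆ range (m + 2))
    (hfarU : ∀ s < m + 2, s ∉ U → s + 2 ≤ t ∨ t + 2 ≤ s) :
    ∑ s ∈ range (m + 2), A (f t) (f s) * chainNullVector A f m s =
      ∑ s ∈ U, A (f t) (f s) * chainNullVector A f m s := by
  refine (sum_subset hU fun s hs hsU ↦ ?_).symm
  have hs := mem_range.mp hs
  rcases hfarU s hs hsU with h | h
  · rw [(hc.far s t h ht).2, zero_mul]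
  · rw [(hc.far t s h (by omega)).1, zero_mul]

lemma sum_mul_chainNullVector (hA : IsGCM A) (hc : IsDoubleEndedChain A f m) {t : ℕ}
    (ht : t ≤ m + 1) : ∑ s ∈ range (m + 2), A (f t) (f s) * chainNullVector A f m s = 0 := by
  have hm := hc.one_le
  by_cases ht₀ : t = 0
  · subst ht₀
    rw [hc.sum_range_eq_sum_subset ht (U := {0, 1}) (by intro s; simp; omega)
        (by intro s; simp; omega), sum_pair zero_ne_one,
      chainNullVector_of_ne one_ne_zero (by omega), hA.1]
    simp only [chainNullVector, if_true]
    ring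
  by_cases htm : t = m + 1
  · subst htm
    rw [hc.sum_range_eq_sum_subset ht (U := {m, m + 1}) (by intro s; simp; omega)
        (by intro s; simp; omega), sum_pair (by omega),
      chainNullVector_of_ne (by omega) (by omega), hA.1]
    simp only [chainNullVector, Nat.add_one_ne_zero, if_false, if_true]
    ring
  rw [hc.sum_range_eq_sum_subset ht (U := {t - 1, t, t + 1}) (by intro s; simp; omega)
      (by intro s; simp; omega), sum_insert (by simp; omega), sum_pair (by omega), hA.1,
    hc.mul_chainNullVector_of_adj (by omega) (by omega) (by omega),
    hc.mul_chainNullVector_of_adj (by omega) (by omega) (by omega),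
    chainNullVector_of_ne ht₀ htm]
  norm_num

lemma det_submatrix_eq_zero (hA : IsGCM A) (hc : IsDoubleEndedChain A f m) :
    (A.submatrix (fun s : Fin (m + 2) ↦ f s) (fun s : Fin (m + 2) ↦ f s)).det = 0 := by
  rw [← Matrix.exists_mulVec_eq_zero_iff]
  refine ⟨fun s ↦ chainNullVector A f m s, fun h ↦ ?_, funext fun t ↦ ?_⟩
  · have := congrFun h ⟨1, by omega⟩
    simp only [Pi.zero_apply] at this
    rw [chainNullVector_of_ne one_ne_zero (by have := hc.one_le; omega)] at this
    omega
  · simp only [Matrix.mulVec, dotProduct, Matrix.submatrix_apply, Pi.zero_apply]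
    rw [Fin.sum_univ_eq_sum_range (fun s ↦ A (f t) (f s) * chainNullVector A f m s)]
    exact hc.sum_mul_chainNullVector hA (by omega)

end IsDoubleEndedChain

end AffineChain

section Hyperbolic

variable {ι : Type} [Fintype ι] [DecidableEq ι] {A : Matrix ι ι ℤ}

lemma IsHyperbolic.det_matSub_pos_of_ssubset (hhyp : IsHyperbolic A) {S T : Finset ι}
    (hS : S ≠ univ) (hSconn : ((dynkinGraph A).induce (S : Set ι)).Connected) (hTS : T ⊂ S) :
    0 < (matSub A T).det := by
  rw [← det_matSub_matSub A hTS.subset]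
  rcases hhyp.2.2.2.2 S hS hSconn with hfin | haff
  · exact hfin _
  · refine haff.2.2 _ fun h ↦ ?_
    obtain ⟨x, hxS, hxT⟩ := exists_of_ssubset hTS
    have : (⟨x, hxS⟩ : S) ∈ T.subtype (· ∈ S) := h ▸ mem_univ _
    exact hxT (mem_subtype.mp this)

lemma IsHyperbolic.det_matSub_pos (hhyp : IsHyperbolic A) {T : Finset ι}
    (hT : ((dynkinGraph A).induce (T : Set ι)).Connected) (hcard : #T + 2 ≤ Fintype.card ι) :
    0 < (matSub A T).det := by
  obtain ⟨⟨t, ht⟩⟩ := hT.nonempty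
  obtain ⟨x, -, hx⟩ := exists_mem_notMem_of_card_lt_card (s := T) (t := univ)
    (by rw [card_univ]; omega)
  obtain ⟨e, -, he, he'⟩ := ((hhyp.2.1 t x).some).exists_boundary_dart T ht hx
  have hS : insert e.snd T ≠ univ := by
    intro h
    have := card_insert_of_notMem he'
    rw [h, card_univ] at this
    omega
  refine hhyp.det_matSub_pos_of_ssubset hS ?_ (ssubset_insert he')
  rw [coe_insert]
  exact SimpleGraph.connected_induce_insert hT he e.adj.symm

lemma IsHyperbolic.mul_le_two_of_adj (hA : IsGCM A) (hhyp : IsHyperbolic A)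
    (h5 : 5 ≤ Fintype.card ι) {i j : ι} (hij : (dynkinGraph A).Adj i j) :
    A i j * A j i ≤ 2 := by
  by_contra! h3
  obtain ⟨x, -, hx⟩ := exists_mem_notMem_of_card_lt_card (s := {i, j}) (t := univ)
    (by rw [card_univ]; have := card_le_two (a := i) (b := j); omega)
  obtain ⟨⟨⟨s, y⟩, hsy⟩, -, hs, hy⟩ :=
    ((hhyp.2.1 i x).some).exists_boundary_dart ({i, j} : Finset ι) (by simp) hx
  simp only [coe_pair, Set.mem_insert_iff, Set.mem_singleton_iff, not_or] at hs hy
  obtain ⟨hyi, hyj⟩ := hy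
  have hconn : ((dynkinGraph A).induce ((({y, i, j} : Finset ι)) : Set ι)).Connected := by
    rw [coe_insert, coe_pair]
    exact SimpleGraph.connected_induce_insert
      (SimpleGraph.induce_pair_connected_of_adj hij) (by simpa using hs) hsy.symm
  have hy : 1 ≤ A y i * A i y + A y j * A j y := by
    have := hA.one_le_mul_of_adj hsy.symm
    rcases hs with rfl | rfl
    · linarith [hA.mul_transpose_nonneg y j]
    · linarith [hA.mul_transpose_nonneg y i]
  have hpos := hhyp.det_matSub_pos hconn
    (by have := card_le_three (a := y) (b := i) (c := j); omega)
  exact hpos.not_ge (hA.det_matSub_three_nonpos hyi hyj hij.1 h3 hy)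

lemma IsHyperbolic.exists_double_edge_between (hA : IsGCM A) (hhyp : IsHyperbolic A)
    (hprod : ∀ i j, (dynkinGraph A).Adj i j → A i j * A j i ≤ 2)
    {u v : ι} (p : (dynkinGraph A).Walk u v) (hp : p.length = (dynkinGraph A).dist u v)
    {b : ℕ} (hb₀ : 0 < b) (hbL : b + 3 ≤ p.length)
    (h₀ : A (p.getVert 0) (p.getVert 1) * A (p.getVert 1) (p.getVert 0) = 2)
    (hb : A (p.getVert b) (p.getVert (b + 1)) * A (p.getVert (b + 1)) (p.getVert b) = 2) :
    ∃ t, 0 < t ∧ t < b ∧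
      A (p.getVert t) (p.getVert (t + 1)) * A (p.getVert (t + 1)) (p.getVert t) = 2 := by
  by_contra! hsimple
  have hinj := (p.isPath_of_length_eq_dist hp).getVert_injOn
  have hchain :=
    IsDoubleEndedChain.of_walk_length_eq_dist hA hprod p hp hb₀ (by omega) h₀ hb hsimple
  set T := (range (b + 2)).image p.getVert
  have hinjT : Set.InjOn p.getVert (range (b + 2)) :=
    hinj.mono fun t ht ↦ by simp at ht ⊢; omega
  have hdet : (matSub A T).det = 0 := by
    rw [det_matSub_image_range A _ _ hinjT]
    exact hchain.det_submatrix_eq_zero hA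
  have hconn : ((dynkinGraph A).induce (T : Set ι)).Connected :=
    SimpleGraph.connected_induce_image_range fun t ht ↦ p.adj_getVert_succ (by omega)
  have hout : ∀ s, b + 2 ≤ s → s ≤ p.length → p.getVert s ∉ T := by
    intro s hs hsL hsT
    obtain ⟨t, ht, hts⟩ := mem_image.mp hsT
    have := hinj (by simp at ht ⊢; omega) (by simpa using hsL) hts
    simp at ht
    omega
  have hcard : #T + 2 ≤ Fintype.card ι := by
    have hne : p.getVert (b + 2) ≠ p.getVert (b + 3) := fun h ↦ by
      have := hinj (by simp; omega) (by simp; omega) h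
      omega
    have := card_le_univ (insert (p.getVert (b + 2)) (insert (p.getVert (b + 3)) T))
    rw [card_insert_of_notMem (by simp [hne, hout (b + 2) le_rfl (by omega)]),
      card_insert_of_notMem (hout (b + 3) (by omega) hbL)] at this
    omega
  exact (hhyp.det_matSub_pos hconn hcard).ne' hdet

lemma IsHyperbolic.card_double_edges_le_three (hA : IsGCM A) (hhyp : IsHyperbolic A)
    (hprod : ∀ i j, (dynkinGraph A).Adj i j → A i j * A j i ≤ 2)
    {u v : ι} (p : (dynkinGraph A).Walk u v) (hp : p.length = (dynkinGraph A).dist u v) :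
    #{t ∈ range p.length |
      A (p.getVert t) (p.getVert (t + 1)) * A (p.getVert (t + 1)) (p.getVert t) = 2} ≤ 3 := by
  by_contra! h
  obtain ⟨a, ha, b, hb, hab, hgap, c, hc, hbc⟩ := exists_consecutive_pair_of_four_le_card h
  simp only [mem_filter, mem_range] at ha hb hc
  have hp' := SimpleGraph.length_eq_dist_of_subwalk hp (p.isSubwalk_drop a)
  obtain ⟨t, ht₀, htb, ht⟩ := hhyp.exists_double_edge_between hA hprod (p.drop a) hp'
    (b := b - a) (by omega) (by simp; omega) (by simpa using ha.2)
    (by simpa [Nat.add_sub_cancel' hab.le, ← add_assoc] using hb.2)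
  simp only [SimpleGraph.Walk.drop_getVert, ← add_assoc] at ht
  have := hgap (a + t) (by simp; omega) (by omega)
  omega

lemma IsHyperbolic.exists_zpow_abs_le_three (hA : IsGCM A) (hhyp : IsHyperbolic A)
    (h5 : 5 ≤ Fintype.card ι) {d : ι → ℚ}
    (hdA : ∀ i j, d i * (A i j : ℚ) = d j * (A j i : ℚ)) (u v : ι) :
    ∃ k : ℤ, d v = d u * 2 ^ k ∧ |k| ≤ 3 := by
  have hprod := fun i j ↦ hhyp.mul_le_two_of_adj hA h5 (i := i) (j := j)
  obtain ⟨p, hp⟩ := hhyp.2.1.exists_walk_length_eq_dist u v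
  obtain ⟨k, hk, hkL⟩ := hA.exists_zpow_of_chain hdA hprod (f := p.getVert) (L := p.length)
    fun t ht ↦ p.adj_getVert_succ ht
  rw [p.getVert_length, p.getVert_zero] at hk
  exact ⟨k, hk, hkL.trans (by exact_mod_cast hhyp.card_double_edges_le_three hA hprod p hp)⟩

end Hyperbolic

theorem hyperbolic_at_most_four_root_lengths_general {n : ℕ} (A : Matrix (Fin n) (Fin n) ℤ)
    (hA : IsGCM A) (hhyp : IsHyperbolic A)
    (d : Fin n → ℚ) (hd : ∀ i, 0 < d i)
    (hdA : ∀ i j, d i * (A i j : ℚ) = d j * (A j i : ℚ)) :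
    (Finset.univ.image d).card ≤ 4 := by
  rcases le_or_gt n 4 with hn | hn
  · exact card_image_le.trans (by simpa using hn)
  obtain ⟨u, -, hu⟩ := exists_min_image univ d ⟨⟨0, by omega⟩, mem_univ _⟩
  have hsub : univ.image d ⊆ (Icc (0 : ℤ) 3).image fun k ↦ d u * 2 ^ k := by
    intro x hx
    obtain ⟨j, -, rfl⟩ := mem_image.mp hx
    obtain ⟨k, hk, hk3⟩ := hhyp.exists_zpow_abs_le_three hA (by simpa using hn.nat_succ_le) hdA u j
    have hk₀ : 0 ≤ k := by
      have := hu j (mem_univ j)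
      rw [hk, le_mul_iff_one_le_right (hd u)] at this
      exact (one_le_zpow_iff_right₀ one_lt_two).mp this
    exact mem_image.mpr ⟨k, mem_Icc.mpr ⟨hk₀, (abs_le.mp hk3).2⟩, hk.symm⟩
  exact (card_le_card hsub).trans (card_image_le.trans (by simp))

/-- For a symmetrizable hyperbolic GCM with positive rational symmetrizer `d`, the values
`d 1, …, d n` take at most 4 distinct values (hence the real roots of the corresponding
root system have at most 4 distinct lengths). -/
theorem hyperbolic_at_most_four_root_lengths {n : ℕ} (A : Matrix (Fin n) (Fin n) ℤ)
    (hA : IsGCM A) (hsym : IsSymmetrizable A) (hhyp : IsHyperbolic A)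
    (d : Fin n → ℚ) (hd : ∀ i, 0 < d i)
    (hdA : ∀ i j, d i * (A i j : ℚ) = d j * (A j i : ℚ)) :
    (Finset.univ.image d).card ≤ 4 :=
  hyperbolic_at_most_four_root_lengths_general A hA hhyp d hd hdA
end

section
/- Let A be an n×n symmetrizable generalized Cartan matrix with Weyl group W acting on ℚ^n, and let i and j be indices lying in different connected components of the simply laced skeleton of A. Then the Weyl group orbits W·e_i and W·e_j are disjoint. -/
/-- The Weyl group of an `n × n` GCM `A`: the subgroup of linear automorphisms of `ℚ^n`
generated by the simple reflections `s i`, where `s i (e j) = e j - A i j • e i`. -/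
def weylGroup {n : ℕ} (A : Matrix (Fin n) (Fin n) ℤ) :
    Subgroup ((Fin n → ℚ) ≃ₗ[ℚ] (Fin n → ℚ)) :=
  Subgroup.closure {w | ∃ i, ∀ j, w (Pi.single j 1) =
    (Pi.single j 1 : Fin n → ℚ) - (A i j : ℚ) • (Pi.single i 1 : Fin n → ℚ)}

/-- The orbit of the simple root `e i` under the Weyl group of `A`. -/
def weylOrbit {n : ℕ} (A : Matrix (Fin n) (Fin n) ℤ) (i : Fin n) : Set (Fin n → ℚ) :=
  {v | ∃ w ∈ weylGroup A, w (Pi.single i 1) = v}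

/-- The simply laced skeleton of `A`: the simple graph with `i` adjacent to `j` iff
`i ≠ j` and `A i j = -1 = A j i`. -/
def skeleton {n : ℕ} (A : Matrix (Fin n) (Fin n) ℤ) : SimpleGraph (Fin n) where
  Adj i j := i ≠ j ∧ A i j = -1 ∧ A j i = -1
  symm := by constructor; intro i j h; exact ⟨h.1.symm, h.2.2, h.2.1⟩
  loopless := by constructor; intro i h; exact h.1 rfl

/-!
The Weyl group is the image of the Coxeter group attached to `A` under its geometric
representation `ρ`, and `ρ` is faithful: if `ℓ(w sₖ) > ℓ(w)` then `ρ(w) eₖ` has nonnegative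
coordinates (Tits), which a nontrivial element of the kernel would violate. If `w eᵢ = eⱼ`,
then `w` preserves the invariant bilinear form coming from the symmetrization, so
`w sᵢ w⁻¹ = sⱼ`, first in `GL(ℚⁿ)` and then, by faithfulness, in the Coxeter group. Off the
diagonal, the only odd Coxeter exponent is `3`, which occurs exactly on the edges of the simply
laced skeleton; so the Coxeter group has a sign character sending `sₖ` to `-1` exactly for `k` in
the skeleton component of `i`, and applying it to `w sᵢ w⁻¹ = sⱼ` puts `j` in that component.
-/

-- Two reflections whose Cartan integers have product `c = 4 cos² (π / m)` generate a dihedral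
-- group of order `2m`; `0` stands for `m = ∞`, as in `CoxeterMatrix`.
def coxeterOrder (c : ℤ) : ℕ :=
  if c = 0 then 2 else if c = 1 then 3 else if c = 2 then 4 else if c = 3 then 6 else 0

namespace Module

open Polynomial.Chebyshev

variable {R M : Type*} [CommRing R] [AddCommGroup M] [Module R M] {x y : M} {f g : Dual R M}

lemma reflection_mul_self (hf : f x = 2) : reflection hf * reflection hf = 1 :=
  inv_mul_cancel (reflection hf)

lemma mul_reflection_mul_inv (e : M ≃ₗ[R] M) (hf : f x = 2) (hg : g y = 2) (hxy : e x = y)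
    (hfg : ∀ z, g (e z) = f z) : e * reflection hf * e⁻¹ = reflection hg := by
  ext z
  have hz : g z = f (e⁻¹ z) := by rw [← hfg, ← LinearEquiv.mul_apply, mul_inv_cancel]; rfl
  simp [reflection_apply, hz, hxy]

lemma reflection_mul_reflection_pow_coxeterOrder (hf : f x = 2) (hg : g y = 2) {a b : ℤ}
    (ha : f y = a) (hb : g x = b) (hab : a = 0 ↔ b = 0) :
    (reflection hf * reflection hg) ^ coxeterOrder (a * b) = 1 := by
  have hτ (c : ℤ) (hc : a * b = c) : (c : R) - 2 = f y * g x - 2 := by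
    rw [ha, hb, ← hc]; push_cast; ring
  unfold coxeterOrder
  split_ifs with h0 h1 h2 h3
  · obtain ⟨rfl, rfl⟩ : a = 0 ∧ b = 0 := by simp_all
    have hcomm : Commute (reflection hf) (reflection hg) := by
      ext z
      simp only [LinearEquiv.mul_apply, reflection_apply, map_sub, map_smul, ha, hb,
        Int.cast_zero]
      module
    rw [hcomm.mul_pow, sq, sq, reflection_mul_self, reflection_mul_self, one_mul]
  · apply LinearEquiv.toLinearMap_injective
    rw [reflection_mul_reflection_pow hf hg 3 _ (hτ 1 h1)]
    norm_num [S_zero, S_one, S_neg_one]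
  · apply LinearEquiv.toLinearMap_injective
    rw [reflection_mul_reflection_pow hf hg 4 _ (hτ 2 h2)]
    norm_num [S_zero, S_one, S_neg_one]
  · apply LinearEquiv.toLinearMap_injective
    rw [reflection_mul_reflection_pow hf hg 6 _ (hτ 3 h3)]
    norm_num [S_zero, S_one, S_neg_one, S_two]
  · rw [pow_zero]

end Module

namespace CoxeterMatrix

variable {B : Type*} {M : CoxeterMatrix B}

lemma isLiftable_ite_neg_one (P : B → Prop) [DecidablePred P]
    (hP : ∀ k l, Odd (M k l) → (P k ↔ P l)) :
    M.IsLiftable fun k ↦ if P k then (-1 : ℤˣ) else 1 := by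
  intro k l
  have hEven : ¬ (P k ↔ P l) → Even (M k l) := fun h ↦ Nat.not_odd_iff_even.mp (mt (hP k l) h)
  by_cases hk : P k <;> by_cases hl : P l <;> simp_all

end CoxeterMatrix

namespace CoxeterSystem

variable {B W : Type*} [Group W] {M : CoxeterMatrix B} (cs : CoxeterSystem M W)

local prefix:100 "s" => cs.simple
local prefix:100 "π" => cs.wordProd
local prefix:100 "ℓ" => cs.length

theorem exists_eq_mul_alternatingWord {w : W} {i : B} (hi : ¬ cs.IsRightDescent w i) (j : B) :
    ∃ u t, w = u * π (alternatingWord i j t) ∧ ℓ w = ℓ u + t ∧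
      ¬ cs.IsRightDescent u i ∧ ¬ cs.IsRightDescent u j := by
  induction hw : ℓ w using Nat.strong_induction_on generalizing w i j with
  | _ N ih =>
  by_cases hj : cs.IsRightDescent w j
  · have hℓ := cs.isRightDescent_iff.mp hj
    obtain ⟨u, t, hu, hℓu, huj, hui⟩ := ih (ℓ (w * s j)) (by omega) (w := w * s j)
      (cs.isRightDescent_iff_not_isRightDescent_mul.mp hj) i rfl
    refine ⟨u, t + 1, ?_, by omega, hui, huj⟩
    rw [alternatingWord_succ, wordProd_concat, ← mul_assoc, ← hu,
      simple_mul_simple_cancel_right]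
  · exact ⟨w, 0, by simp [alternatingWord], by simp [hw], hi, hj⟩

theorem lt_of_eq_mul_alternatingWord {u w : W} {i j : B} {t : ℕ}
    (hw : w = u * π (alternatingWord i j t)) (hℓ : ℓ w = ℓ u + t)
    (hi : ¬ cs.IsRightDescent w i) : M i j = 0 ∨ t < M i j := by
  have hwi : w * s i = u * π (alternatingWord j i (t + 1)) := by
    rw [alternatingWord_succ, wordProd_concat, hw, mul_assoc]
  have hred : cs.IsReduced (alternatingWord j i (t + 1)) := by
    have := cs.length_mul_le u (π (alternatingWord j i (t + 1)))
    have := cs.length_wordProd_le (alternatingWord j i (t + 1))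
    rw [← hwi, cs.not_isRightDescent_iff.mp hi] at *
    simp only [IsReduced, length_alternatingWord] at *
    omega
  by_contra! h
  exact cs.not_isReduced_alternatingWord j i (by rw [M.symmetric]; exact h.1)
    (by rw [M.symmetric]; omega) hred

end CoxeterSystem

namespace Polynomial.Chebyshev

variable {R : Type*} [CommRing R] [LinearOrder R] [IsStrictOrderedRing R]

lemma S_eval_nonneg_of_two_le {τ : R} (hτ : 2 ≤ τ) {q : ℤ} (hq : -1 ≤ q) :
    0 ≤ (S R q).eval τ := by
  have hmono (k : ℕ) : 0 ≤ (S R (k - 1)).eval τ ∧ (S R (k - 1)).eval τ ≤ (S R k).eval τ := by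
    induction k with
    | zero => simp [S_neg_one]
    | succ k ih =>
      rw [Nat.cast_succ, add_sub_cancel_right, S_add_one, eval_sub, eval_mul, eval_X]
      constructor <;> nlinarith
  obtain ⟨k, rfl⟩ : ∃ k : ℕ, q = k - 1 := ⟨(q + 1).toNat, by omega⟩
  exact (hmono k).1

-- For `m = coxeterOrder c < ∞` we have `c - 2 = 2 cos (2π / m)`, and
-- `S q (2 cos θ) = sin ((q + 1) θ) / sin θ`; the finitely many cases are checked directly.
lemma S_eval_nonneg_of_lt_coxeterOrder {c : ℤ} (hc : 0 ≤ c) {q : ℤ} (hq : -1 ≤ q)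
    (hqc : coxeterOrder c = 0 ∨ 2 * q + 1 < coxeterOrder c) :
    0 ≤ (S R q).eval ((c : R) - 2) := by
  by_cases hc4 : 4 ≤ c
  · exact S_eval_nonneg_of_two_le (by linarith [(by exact_mod_cast hc4 : (4 : R) ≤ c)]) hq
  · interval_cases c <;> simp only [coxeterOrder] at hqc <;> norm_num at hqc <;>
      (have : q ≤ 2 := by omega) <;> interval_cases q <;>
      first | omega | norm_num [S_zero, S_one, S_two, S_neg_one]

lemma S_eval_add_S_eval_nonneg_of_lt_coxeterOrder {c : ℤ} (hc : 0 ≤ c) {q : ℤ} (hq : 0 ≤ q)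
    (hqc : coxeterOrder c = 0 ∨ 2 * q < coxeterOrder c) :
    0 ≤ (S R q).eval ((c : R) - 2) + (S R (q - 1)).eval ((c : R) - 2) := by
  by_cases hc4 : 4 ≤ c
  · have hτ : (2 : R) ≤ c - 2 := by linarith [(by exact_mod_cast hc4 : (4 : R) ≤ c)]
    exact add_nonneg (S_eval_nonneg_of_two_le hτ (by omega))
      (S_eval_nonneg_of_two_le hτ (by omega))
  · interval_cases c <;> simp only [coxeterOrder] at hqc <;> norm_num at hqc <;>
      (have : q ≤ 2 := by omega) <;> interval_cases q <;>
      first | omega | norm_num [S_zero, S_one, S_two, S_neg_one]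

end Polynomial.Chebyshev

namespace CartanMatrix

open Module CoxeterSystem Polynomial.Chebyshev

variable {n : ℕ} (A : Matrix (Fin n) (Fin n) ℤ)

def corootForm (i : Fin n) : Dual ℚ (Fin n → ℚ) := ∑ r, (A i r : ℚ) • LinearMap.proj r

lemma corootForm_apply (i : Fin n) (x : Fin n → ℚ) :
    corootForm A i x = ∑ r, (A i r : ℚ) * x r := by
  simp [corootForm]

lemma corootForm_single (i r : Fin n) : corootForm A i (Pi.single r 1) = A i r := by
  simp [corootForm_apply, Pi.single_apply]

variable {A}

lemma corootForm_single_self (hA : ∀ i, A i i = 2) (i : Fin n) :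
    corootForm A i (Pi.single i 1) = 2 := by
  simp [corootForm_single, hA]

def simpleReflection (hA : ∀ i, A i i = 2) (i : Fin n) : (Fin n → ℚ) ≃ₗ[ℚ] (Fin n → ℚ) :=
  reflection (corootForm_single_self hA i)

lemma simpleReflection_apply (hA : ∀ i, A i i = 2) (i : Fin n) (x : Fin n → ℚ) :
    simpleReflection hA i x = x - corootForm A i x • Pi.single i 1 :=
  reflection_apply x (corootForm_single_self hA i)

lemma simpleReflection_single (hA : ∀ i, A i i = 2) (i j : Fin n) :
    simpleReflection hA i (Pi.single j 1) = Pi.single j 1 - (A i j : ℚ) • Pi.single i 1 := by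
  rw [simpleReflection_apply, corootForm_single]

lemma weylGroup_eq_closure (hA : ∀ i, A i i = 2) :
    weylGroup A = Subgroup.closure (Set.range (simpleReflection hA)) := by
  unfold weylGroup
  congr 1
  ext w
  simp only [Set.mem_ofPred_eq, Set.mem_range]
  refine exists_congr fun i ↦ ⟨fun hw ↦ (Pi.basisFun ℚ (Fin n)).ext' fun j ↦ ?_, ?_⟩
  · rw [Pi.basisFun_apply, hw, simpleReflection_single]
  · rintro rfl j
    exact simpleReflection_single hA i j

variable (A) in
def coxeterMatrix : CoxeterMatrix (Fin n) where
  M := Matrix.of fun k l ↦ if k = l then 1 else coxeterOrder (A k l * A l k)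
  isSymm := by
    ext k l
    simp only [Matrix.transpose_apply, Matrix.of_apply, eq_comm (a := l), mul_comm]
  diagonal := by simp
  off_diagonal k l hkl := by
    simp only [Matrix.of_apply, if_neg hkl, coxeterOrder]
    split_ifs <;> omega

lemma coxeterMatrix_of_ne {k l : Fin n} (hkl : k ≠ l) :
    coxeterMatrix A k l = coxeterOrder (A k l * A l k) := by
  simp [coxeterMatrix, hkl]

lemma isLiftable_simpleReflection (hA : IsGCM A) :
    (coxeterMatrix A).IsLiftable (simpleReflection hA.1) := by
  intro k l
  obtain rfl | hkl := eq_or_ne k l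
  · rw [(coxeterMatrix A).diagonal, pow_one]
    exact reflection_mul_self _
  · rw [coxeterMatrix_of_ne hkl]
    exact reflection_mul_reflection_pow_coxeterOrder _ _ (corootForm_single A k l)
      (corootForm_single A l k) ⟨hA.2.2 k l, hA.2.2 l k⟩

variable (A) in
abbrev coxeterSystem : CoxeterSystem (coxeterMatrix A) (coxeterMatrix A).Group :=
  (coxeterMatrix A).toCoxeterSystem

def geomRep (hA : IsGCM A) : (coxeterMatrix A).Group →* (Fin n → ℚ) ≃ₗ[ℚ] (Fin n → ℚ) :=
  (coxeterSystem A).lift ⟨_, isLiftable_simpleReflection hA⟩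

lemma geomRep_simple (hA : IsGCM A) (i : Fin n) :
    geomRep hA ((coxeterSystem A).simple i) = simpleReflection hA.1 i :=
  (coxeterSystem A).lift_apply_simple _ i

lemma range_geomRep (hA : IsGCM A) : (geomRep hA).range = weylGroup A := by
  rw [weylGroup_eq_closure hA.1, MonoidHom.range_eq_map,
    ← (coxeterSystem A).subgroup_closure_range_simple, MonoidHom.map_closure, ← Set.range_comp]
  simp only [Function.comp_def, geomRep_simple]

lemma geomRep_alternatingWord_apply_single (hA : IsGCM A) {k l : Fin n} (hkl : k ≠ l) {t : ℕ}
    (ht : coxeterMatrix A k l = 0 ∨ t < coxeterMatrix A k l) :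
    ∃ α β : ℚ, 0 ≤ α ∧ 0 ≤ β ∧
      geomRep hA ((coxeterSystem A).wordProd (alternatingWord k l t)) (Pi.single k 1) =
        α • Pi.single k 1 + β • Pi.single l 1 := by
  rw [coxeterMatrix_of_ne hkl] at ht
  have hc : 0 ≤ A k l * A l k :=
    mul_nonneg_of_nonpos_of_nonpos (hA.2.1 k l hkl) (hA.2.1 l k hkl.symm)
  have hτ : corootForm A k (Pi.single l 1) * corootForm A l (Pi.single k 1) - 2 =
      ((A k l * A l k : ℤ) : ℚ) - 2 := by
    simp [corootForm_single]
  have hlk : (0 : ℚ) ≤ -corootForm A l (Pi.single k 1) := by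
    simpa [corootForm_single] using hA.2.1 l k hkl.symm
  obtain ⟨p, rfl | rfl⟩ := Nat.even_or_odd' t
  · refine ⟨_, _, S_eval_add_S_eval_nonneg_of_lt_coxeterOrder (q := p) hc (by omega) (by omega),
      mul_nonneg (S_eval_nonneg_of_lt_coxeterOrder (q := p - 1) hc (by omega) (by omega)) hlk, ?_⟩
    rw [prod_alternatingWord_eq_mul_pow, if_pos (even_two_mul p), one_mul,
      show 2 * p / 2 = p by omega, map_pow, map_mul, geomRep_simple, geomRep_simple]
    exact reflection_mul_reflection_pow_apply_self (corootForm_single_self hA.1 k)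
      (corootForm_single_self hA.1 l) p _ hτ.symm
  · refine ⟨_, _, S_eval_add_S_eval_nonneg_of_lt_coxeterOrder (q := p) hc (by omega) (by omega),
      mul_nonneg (S_eval_nonneg_of_lt_coxeterOrder (q := p) hc (by omega) (by omega)) hlk, ?_⟩
    rw [prod_alternatingWord_eq_mul_pow, if_neg (Nat.not_even_two_mul_add_one p),
      show (2 * p + 1) / 2 = p by omega, map_mul, map_pow, map_mul, geomRep_simple,
      geomRep_simple]
    exact reflection_mul_reflection_mul_reflection_pow_apply_self (corootForm_single_self hA.1 k)
      (corootForm_single_self hA.1 l) p _ hτ.symm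

-- Peel off from `w` a maximal alternating suffix `⋯ sₖ sₗ`: it maps `e k` into the cone spanned
-- by `e k` and `e l`, and the remaining prefix is shorter and has neither `k` nor `l` as a
-- right descent.
theorem geomRep_apply_single_nonneg (hA : IsGCM A) {w : (coxeterMatrix A).Group} {k : Fin n}
    (hk : ¬ (coxeterSystem A).IsRightDescent w k) (r : Fin n) :
    0 ≤ geomRep hA w (Pi.single k 1) r := by
  induction hw : (coxeterSystem A).length w using Nat.strong_induction_on generalizing w k with
  | _ N ih =>
  obtain rfl | hw1 := eq_or_ne w 1
  · simp [Pi.single_apply, apply_ite]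
  obtain ⟨l, hl⟩ := (coxeterSystem A).exists_rightDescent_of_ne_one hw1
  obtain ⟨u, t, rfl, hℓ, huk, hul⟩ := (coxeterSystem A).exists_eq_mul_alternatingWord hk l
  have hkl : k ≠ l := by rintro rfl; exact hk hl
  have ht : t ≠ 0 := by rintro rfl; exact hul (by simpa [alternatingWord] using hl)
  obtain ⟨α, β, hα, hβ, hαβ⟩ := geomRep_alternatingWord_apply_single hA hkl
    ((coxeterSystem A).lt_of_eq_mul_alternatingWord rfl hℓ hk)
  rw [map_mul, LinearEquiv.mul_apply, hαβ, map_add, map_smul, map_smul]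
  have hu : (coxeterSystem A).length u < N := by omega
  exact add_nonneg (mul_nonneg hα (ih _ hu huk rfl)) (mul_nonneg hβ (ih _ hu hul rfl))

theorem geomRep_injective (hA : IsGCM A) : Function.Injective (geomRep hA) := by
  rw [injective_iff_map_eq_one]
  intro w hw
  by_contra hw1
  obtain ⟨k, hk⟩ := (coxeterSystem A).exists_rightDescent_of_ne_one hw1
  have := geomRep_apply_single_nonneg hA
    ((coxeterSystem A).isRightDescent_iff_not_isRightDescent_mul.mp hk) k
  rw [map_mul, hw, one_mul, geomRep_simple, simpleReflection_single, hA.1] at this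
  norm_num at this

variable (A) in
def invariantForm (d : Fin n → ℚ) : LinearMap.BilinForm ℚ (Fin n → ℚ) :=
  Matrix.toBilin' (Matrix.diagonal d * A.map (↑))

lemma invariantForm_single_left (d : Fin n → ℚ) (i : Fin n) (y : Fin n → ℚ) :
    invariantForm A d (Pi.single i 1) y = d i * corootForm A i y := by
  simp [invariantForm, Matrix.toBilin'_apply, corootForm_apply, Matrix.diagonal_mul,
    Pi.single_apply, Finset.mul_sum, mul_assoc]

lemma invariantForm_single_right {d : Fin n → ℚ} (hd : ∀ i j, d i * A i j = d j * A j i)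
    (i : Fin n) (x : Fin n → ℚ) :
    invariantForm A d x (Pi.single i 1) = d i * corootForm A i x := by
  simp only [invariantForm, Matrix.toBilin'_apply, Matrix.diagonal_mul, Matrix.map_apply,
    Pi.single_apply, mul_ite, mul_one, mul_zero, Finset.sum_ite_eq', Finset.mem_univ, if_true,
    corootForm_apply, Finset.mul_sum]
  refine Finset.sum_congr rfl fun r _ ↦ ?_
  rw [hd r i]
  ring

lemma invariantForm_simpleReflection (hA : ∀ i, A i i = 2) {d : Fin n → ℚ}
    (hd : ∀ i j, d i * A i j = d j * A j i) (i : Fin n) (x y : Fin n → ℚ) :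
    invariantForm A d (simpleReflection hA i x) (simpleReflection hA i y) =
      invariantForm A d x y := by
  simp only [simpleReflection_apply, map_sub, map_smul, LinearMap.sub_apply,
    LinearMap.smul_apply, invariantForm_single_left, invariantForm_single_right hd,
    corootForm_single_self hA, smul_eq_mul]
  ring

lemma invariantForm_geomRep (hA : IsGCM A) {d : Fin n → ℚ}
    (hd : ∀ i j, d i * A i j = d j * A j i) (g : (coxeterMatrix A).Group) (x y : Fin n → ℚ) :
    invariantForm A d (geomRep hA g x) (geomRep hA g y) = invariantForm A d x y := by
  induction g using (coxeterSystem A).simple_induction generalizing x y with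
  | simple i => rw [geomRep_simple, invariantForm_simpleReflection hA.1 hd]
  | one => rfl
  | mul g h hg hh => rw [map_mul, LinearEquiv.mul_apply, LinearEquiv.mul_apply, hg, hh]

lemma mul_simple_mul_inv_eq_simple (hA : IsGCM A) (hsym : IsSymmetrizable A)
    {g : (coxeterMatrix A).Group} {i j : Fin n}
    (hg : geomRep hA g (Pi.single i 1) = Pi.single j 1) :
    g * (coxeterSystem A).simple i * g⁻¹ = (coxeterSystem A).simple j := by
  obtain ⟨d, hd0, hd⟩ := hsym
  have hB := invariantForm_geomRep hA hd g
  have hdij : d i = d j := by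
    have := hB (Pi.single i 1) (Pi.single i 1)
    rw [hg, invariantForm_single_left, invariantForm_single_left, corootForm_single_self hA.1,
      corootForm_single_self hA.1] at this
    linarith
  have hcoroot (y : Fin n → ℚ) : corootForm A j (geomRep hA g y) = corootForm A i y := by
    have := hB (Pi.single i 1) y
    rw [hg, invariantForm_single_left, invariantForm_single_left, hdij] at this
    exact mul_left_cancel₀ (hd0 j) this
  apply geomRep_injective hA
  rw [map_mul, map_mul, map_inv, geomRep_simple, geomRep_simple]
  exact mul_reflection_mul_inv _ _ _ hg hcoroot

lemma eq_or_adj_of_odd_coxeterMatrix (hA : IsGCM A) {k l : Fin n}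
    (h : Odd (coxeterMatrix A k l)) : k = l ∨ (skeleton A).Adj k l := by
  refine or_iff_not_imp_left.mpr fun hkl ↦ ⟨hkl, ?_⟩
  rw [coxeterMatrix_of_ne hkl, coxeterOrder] at h
  split_ifs at h with h0 h1 <;> norm_num [Nat.odd_iff] at h
  have := hA.2.1 k l hkl
  rcases Int.mul_eq_one_iff_eq_one_or_neg_one.mp h1 with ⟨hkl, -⟩ | hneg
  · omega
  · exact hneg

theorem reachable_of_mul_simple_mul_inv_eq_simple (hA : IsGCM A)
    {g : (coxeterMatrix A).Group} {i j : Fin n}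
    (h : g * (coxeterSystem A).simple i * g⁻¹ = (coxeterSystem A).simple j) :
    (skeleton A).Reachable i j := by
  classical
  have hsign := (coxeterMatrix A).isLiftable_ite_neg_one ((skeleton A).Reachable i)
    fun k l hkl ↦ by
    rcases eq_or_adj_of_odd_coxeterMatrix hA hkl with rfl | hadj
    · rfl
    · exact ⟨fun h ↦ h.trans hadj.reachable, fun h ↦ h.trans hadj.symm.reachable⟩
  have := congrArg ((coxeterSystem A).lift ⟨_, hsign⟩) h
  rw [map_mul, map_mul, map_inv, mul_inv_cancel_comm, lift_apply_simple, lift_apply_simple,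
    if_pos (SimpleGraph.Reachable.refl i)] at this
  by_contra hij
  rw [if_neg hij] at this
  exact absurd this (by decide)

end CartanMatrix

open CartanMatrix

/-- If `i` and `j` lie in different connected components of the simply laced skeleton of a
symmetrizable GCM `A`, then the Weyl group orbits `W·e i` and `W·e j` are disjoint. -/
theorem weylOrbits_disjoint_of_not_reachable {n : ℕ} (A : Matrix (Fin n) (Fin n) ℤ)
    (hA : IsGCM A) (hsym : IsSymmetrizable A) (i j : Fin n)
    (h : ¬ (skeleton A).Reachable i j) :
    Disjoint (weylOrbit A i) (weylOrbit A j) := by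
  rw [Set.disjoint_left]
  rintro _ ⟨w₁, hw₁, rfl⟩ ⟨w₂, hw₂, hw⟩
  obtain ⟨g, hg⟩ : w₂⁻¹ * w₁ ∈ (geomRep hA).range := by
    rw [range_geomRep]
    exact mul_mem (inv_mem hw₂) hw₁
  have hgij : geomRep hA g (Pi.single i 1) = Pi.single j 1 := by
    rw [hg, LinearEquiv.mul_apply, ← hw, ← LinearEquiv.mul_apply, inv_mul_cancel]
    rfl
  exact h (reachable_of_mul_simple_mul_inv_eq_simple hA
    (mul_simple_mul_inv_eq_simple hA hsym hgij))
end

section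
/- Let A be an n×n symmetrizable generalized Cartan matrix with Weyl group W acting on ℚ^n. For i ≠ j, the simple roots e_i and e_j lie in the same W-orbit (i.e., there exists w ∈ W with w·e_j = e_i) if and only if i and j lie in the same connected component of the simply laced skeleton of A, i.e., i and j are connected by a path of single edges (edges with A k l = A l k = −1) in the Dynkin diagram. -/
open CoxeterSystem
  (alternatingWord alternatingWord_succ alternatingWord_succ' length_alternatingWord)

/-- For `c = A s t` and `d = A t s`, the coordinates on `e s, e t` of the image of `e s` under
the alternating product `⋯ σ s σ t` of `r` simple reflections. -/
def rank2Coeffs (c d : ℤ) : ℕ → ℤ × ℤ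
  | 0 => (1, 0)
  | r + 1 =>
    let x := rank2Coeffs c d r
    if Even r then (x.1, -d * x.1 - x.2) else (-c * x.2 - x.1, x.2)

def Rank2Positive (c d : ℤ) (r : ℕ) : Prop :=
  0 ≤ (rank2Coeffs c d r).1 ∧ 0 ≤ (rank2Coeffs c d r).2 ∧
    ((rank2Coeffs c d r).1 = 0 → c = -1 ∧ d = -1)

lemma drop_alternatingWord {B : Type*} (s t : B) (k m : ℕ) :
    (alternatingWord s t (k + m)).drop k = alternatingWord s t m := by
  induction k with
  | zero => simp
  | succ k ih => rw [Nat.add_right_comm, alternatingWord_succ', List.drop_succ_cons, ih]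

section Rank2

variable {c d : ℤ}

lemma rank2Coeffs_growth (hc : c ≤ -1) (hd : d ≤ -1) (h4 : 4 ≤ c * d) {r : ℕ} (hr : 0 < r) :
    1 ≤ (rank2Coeffs c d r).1 ∧ 1 ≤ (rank2Coeffs c d r).2 ∧
      (Even r → 2 * (rank2Coeffs c d r).2 ≤ -d * (rank2Coeffs c d r).1) ∧
      (¬Even r → 2 * (rank2Coeffs c d r).1 ≤ -c * (rank2Coeffs c d r).2) := by
  induction r, hr using Nat.le_induction with
  | base =>
    have h1 : rank2Coeffs c d 1 = (1, -d) := by simp [rank2Coeffs]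
    rw [h1]
    exact ⟨le_rfl, by omega, fun h => absurd h (by decide), fun _ => by nlinarith⟩
  | succ r _ ih =>
    obtain ⟨ha, hb, heven, hodd⟩ := ih
    by_cases hr : Even r
    · have hba := heven hr
      simp only [rank2Coeffs, hr, if_true, Nat.even_add_one, not_true, not_false_eq_true,
        false_imp_iff, forall_const, true_and]
      refine ⟨ha, by linarith, by nlinarith⟩
    · have hab := hodd hr
      simp only [rank2Coeffs, hr, if_false, Nat.even_add_one, not_false_eq_true,
        forall_const, not_true, false_imp_iff, and_true]
      refine ⟨by linarith, hb, by nlinarith⟩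

lemma rank2Positive_of_four_le (hc : c ≤ -1) (hd : d ≤ -1) (h4 : 4 ≤ c * d) (r : ℕ) :
    Rank2Positive c d r := by
  rcases Nat.eq_zero_or_pos r with rfl | hr
  · simp [Rank2Positive, rank2Coeffs]
  · obtain ⟨ha, hb, -⟩ := rank2Coeffs_growth hc hd h4 hr
    exact ⟨by linarith, by linarith, fun h => by linarith⟩

/-- The rank 2 types of finite Weyl group, `A₁ × A₁, A₂, B₂, G₂`, with `m = 2, 3, 4, 6`. -/
lemma exists_rank2_braid (hc : c ≤ 0) (hd : d ≤ 0) (hcd : c = 0 ↔ d = 0) (h4 : c * d < 4) :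
    ∃ m, 0 < m ∧ (∀ r < m, Rank2Positive c d r) ∧
      rank2Coeffs c d m = -rank2Coeffs c d (m - 1) ∧
      rank2Coeffs d c m = -rank2Coeffs d c (m - 1) := by
  obtain ⟨rfl, rfl⟩ | ⟨hc3, hc1, hd3, hd1⟩ :
      (c = 0 ∧ d = 0) ∨ (-3 ≤ c ∧ c ≤ -1 ∧ -3 ≤ d ∧ d ≤ -1) := by
    by_cases h0 : c = 0
    · exact .inl ⟨h0, hcd.1 h0⟩
    · have hc1 : c ≤ -1 := by omega
      have hd1 : d ≤ -1 := by have := mt hcd.2 h0; omega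
      exact .inr ⟨by nlinarith, hc1, by nlinarith, hd1⟩
  · exact ⟨2, by norm_num, by unfold Rank2Positive; decide⟩
  · interval_cases c <;> interval_cases d <;>
      first
        | omega
        | exact ⟨3, by norm_num, by unfold Rank2Positive; decide⟩
        | exact ⟨4, by norm_num, by unfold Rank2Positive; decide⟩
        | exact ⟨6, by norm_num, by unfold Rank2Positive; decide⟩

end Rank2

section WeylGroup

variable {n : ℕ} {A : Matrix (Fin n) (Fin n) ℤ}

def coroot (A : Matrix (Fin n) (Fin n) ℤ) (i : Fin n) : Module.Dual ℚ (Fin n → ℚ) :=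
  ∑ l, (A i l : ℚ) • LinearMap.proj l

@[simp] lemma coroot_single (i k : Fin n) : coroot A i (Pi.single k 1) = A i k := by
  simp [coroot, Pi.single_apply]

lemma exists_coroot_eq_zero {s t : Fin n} (hs : A s s = 2) (ht : A t t = 2)
    (hdet : A s t * A t s ≠ 4) (v : Fin n → ℚ) :
    ∃ a b : ℚ, coroot A s (v - a • Pi.single s 1 - b • Pi.single t 1) = 0 ∧
      coroot A t (v - a • Pi.single s 1 - b • Pi.single t 1) = 0 := by
  have hD : (4 - A s t * A t s : ℚ) ≠ 0 := by
    rw [sub_ne_zero]; exact_mod_cast hdet.symm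
  refine ⟨(2 * coroot A s v - A s t * coroot A t v) / (4 - A s t * A t s),
    (2 * coroot A t v - A t s * coroot A s v) / (4 - A s t * A t s), ?_, ?_⟩ <;>
  · simp only [map_sub, map_smul, coroot_single, hs, ht, smul_eq_mul]
    field_simp
    push_cast
    ring

variable (h2 : ∀ i, A i i = 2)

def simpleReflection (i : Fin n) : (Fin n → ℚ) ≃ₗ[ℚ] (Fin n → ℚ) :=
  Module.reflection (f := coroot A i) (x := Pi.single i 1) (by simp [h2])

local notation "σ" => simpleReflection h2

lemma simpleReflection_apply (i : Fin n) (v : Fin n → ℚ) :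
    σ i v = v - coroot A i v • Pi.single i 1 :=
  Module.reflection_apply _ _

lemma simpleReflection_single (i k : Fin n) :
    σ i (Pi.single k 1) = Pi.single k 1 - (A i k : ℚ) • Pi.single i 1 := by
  rw [simpleReflection_apply, coroot_single]

lemma simpleReflection_single_self (i : Fin n) : σ i (Pi.single i 1) = -Pi.single i 1 :=
  Module.reflection_apply_self _

@[simp] lemma simpleReflection_inv (i : Fin n) : (σ i)⁻¹ = σ i :=
  Module.reflection_inv _

@[simp] lemma simpleReflection_mul_self (i : Fin n) : σ i * σ i = 1 := by
  simpa using mul_inv_cancel (σ i)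

lemma simpleReflection_mem_weylGroup (i : Fin n) : σ i ∈ weylGroup A :=
  Subgroup.subset_closure ⟨i, simpleReflection_single h2 i⟩

lemma eq_simpleReflection {w : (Fin n → ℚ) ≃ₗ[ℚ] (Fin n → ℚ)} {i : Fin n}
    (hw : ∀ j, w (Pi.single j 1) = Pi.single j 1 - (A i j : ℚ) • Pi.single i 1) : w = σ i :=
  (Pi.basisFun ℚ (Fin n)).ext' fun j => by
    simp only [Pi.basisFun_apply, hw, simpleReflection_single]

def wordProd (l : List (Fin n)) : (Fin n → ℚ) ≃ₗ[ℚ] (Fin n → ℚ) := (l.map σ).prod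

@[simp] lemma wordProd_nil : wordProd h2 [] = 1 := rfl

@[simp] lemma wordProd_cons (i : Fin n) (l : List (Fin n)) :
    wordProd h2 (i :: l) = σ i * wordProd h2 l := rfl

@[simp] lemma wordProd_append (l l' : List (Fin n)) :
    wordProd h2 (l ++ l') = wordProd h2 l * wordProd h2 l' := by
  simp [wordProd]

@[simp] lemma wordProd_concat (l : List (Fin n)) (i : Fin n) :
    wordProd h2 (l.concat i) = wordProd h2 l * σ i := by
  simp [wordProd]

@[simp] lemma wordProd_reverse (l : List (Fin n)) : wordProd h2 l.reverse = (wordProd h2 l)⁻¹ := by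
  induction l with
  | nil => simp
  | cons i l ih => simp [ih]

lemma exists_wordProd_eq_of_mem {w : (Fin n → ℚ) ≃ₗ[ℚ] (Fin n → ℚ)} (hw : w ∈ weylGroup A) :
    ∃ l, wordProd h2 l = w := by
  induction hw using Subgroup.closure_induction with
  | mem x hx =>
    obtain ⟨i, hi⟩ := hx
    exact ⟨[i], by simp [eq_simpleReflection h2 hi]⟩
  | one => exact ⟨[], rfl⟩
  | mul x y _ _ hx hy =>
    obtain ⟨l, rfl⟩ := hx
    obtain ⟨l', rfl⟩ := hy
    exact ⟨l ++ l', wordProd_append h2 l l'⟩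
  | inv x _ hx =>
    obtain ⟨l, rfl⟩ := hx
    exact ⟨l.reverse, wordProd_reverse h2 l⟩

noncomputable def weylLength (w : (Fin n → ℚ) ≃ₗ[ℚ] (Fin n → ℚ)) : ℕ :=
  sInf {k | ∃ l : List (Fin n), l.length = k ∧ wordProd h2 l = w}

local notation "ℓ" => weylLength h2

lemma weylLength_wordProd_le (l : List (Fin n)) : ℓ (wordProd h2 l) ≤ l.length :=
  Nat.sInf_le ⟨l, rfl, rfl⟩

lemma exists_wordProd_length_eq {w : (Fin n → ℚ) ≃ₗ[ℚ] (Fin n → ℚ)} (hw : w ∈ weylGroup A) :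
    ∃ l : List (Fin n), l.length = ℓ w ∧ wordProd h2 l = w := by
  obtain ⟨l, hl⟩ := exists_wordProd_eq_of_mem h2 hw
  have hne : {k | ∃ l : List (Fin n), l.length = k ∧ wordProd h2 l = w}.Nonempty :=
    ⟨l.length, l, rfl, hl⟩
  exact Nat.sInf_mem hne

lemma weylLength_mul_wordProd_le {w : (Fin n → ℚ) ≃ₗ[ℚ] (Fin n → ℚ)} (hw : w ∈ weylGroup A)
    (l : List (Fin n)) : ℓ (w * wordProd h2 l) ≤ ℓ w + l.length := by
  obtain ⟨l₀, hl₀, rfl⟩ := exists_wordProd_length_eq h2 hw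
  simpa [hl₀] using weylLength_wordProd_le h2 (l₀ ++ l)

lemma exists_weylLength_mul_lt {w : (Fin n → ℚ) ≃ₗ[ℚ] (Fin n → ℚ)} (hw : w ∈ weylGroup A)
    (h1 : w ≠ 1) : ∃ t, ℓ (w * σ t) < ℓ w := by
  obtain ⟨l, hl, rfl⟩ := exists_wordProd_length_eq h2 hw
  obtain rfl | ⟨l, t, rfl⟩ := List.eq_nil_or_concat l
  · exact absurd rfl h1
  refine ⟨t, ?_⟩
  have := weylLength_wordProd_le h2 l
  simp only [wordProd_concat, mul_assoc, simpleReflection_mul_self, mul_one]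
  simp at hl
  omega

lemma wordProd_alternatingWord_apply_single (s t : Fin n) (r : ℕ) :
    wordProd h2 (alternatingWord s t r) (Pi.single s 1) =
      ((rank2Coeffs (A s t) (A t s) r).1 : ℚ) • Pi.single s 1 +
        ((rank2Coeffs (A s t) (A t s) r).2 : ℚ) • Pi.single t 1 := by
  induction r with
  | zero => simp [alternatingWord, rank2Coeffs]
  | succ r ih =>
    rw [alternatingWord_succ', wordProd_cons, LinearEquiv.mul_apply, ih]
    by_cases hr : Even r
    · simp only [hr, if_true, rank2Coeffs, map_add, map_smul, simpleReflection_single, h2]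
      push_cast
      module
    · simp only [hr, if_false, rank2Coeffs, map_add, map_smul, simpleReflection_single, h2]
      push_cast
      module

lemma wordProd_alternatingWord_apply_of_coroot_eq_zero {s t : Fin n} {z : Fin n → ℚ}
    (hs : coroot A s z = 0) (ht : coroot A t z = 0) (r : ℕ) :
    wordProd h2 (alternatingWord s t r) z = z := by
  induction r with
  | zero => rfl
  | succ r ih =>
    rw [alternatingWord_succ', wordProd_cons, LinearEquiv.mul_apply, ih]
    split_ifs <;> simp [simpleReflection_apply, hs, ht]

lemma wordProd_alternatingWord_apply_single_eq {s t : Fin n} {m : ℕ}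
    (h : rank2Coeffs (A s t) (A t s) (m + 1) = -rank2Coeffs (A s t) (A t s) m) :
    wordProd h2 (alternatingWord s t (m + 1)) (Pi.single s 1) =
      wordProd h2 (alternatingWord t s (m + 1)) (Pi.single s 1) := by
  rw [alternatingWord_succ t s, wordProd_concat, LinearEquiv.mul_apply,
    simpleReflection_single_self, map_neg, wordProd_alternatingWord_apply_single,
    wordProd_alternatingWord_apply_single, h]
  simp only [Prod.fst_neg, Prod.snd_neg, Int.cast_neg, neg_smul, neg_add]

lemma wordProd_alternatingWord_comm {s t : Fin n} (hdet : A s t * A t s ≠ 4) {m : ℕ}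
    (hs : rank2Coeffs (A s t) (A t s) (m + 1) = -rank2Coeffs (A s t) (A t s) m)
    (ht : rank2Coeffs (A t s) (A s t) (m + 1) = -rank2Coeffs (A t s) (A s t) m) :
    wordProd h2 (alternatingWord s t (m + 1)) = wordProd h2 (alternatingWord t s (m + 1)) := by
  refine LinearEquiv.ext fun v => ?_
  obtain ⟨a, b, hzs, hzt⟩ := exists_coroot_eq_zero (h2 s) (h2 t) hdet v
  set z := v - a • Pi.single s 1 - b • Pi.single t 1
  have hv : v = a • Pi.single s 1 + b • Pi.single t 1 + z := by simp [z]
  rw [hv]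
  simp only [map_add, map_smul, wordProd_alternatingWord_apply_single_eq h2 hs,
    (wordProd_alternatingWord_apply_single_eq h2 ht).symm,
    wordProd_alternatingWord_apply_of_coroot_eq_zero h2 hzs hzt,
    wordProd_alternatingWord_apply_of_coroot_eq_zero h2 hzt hzs]

lemma rank2Positive_or_braid (hneg : ∀ i j, i ≠ j → A i j ≤ 0)
    (hzero : ∀ i j, A i j = 0 → A j i = 0) {s t : Fin n} (hst : s ≠ t) (r : ℕ) :
    Rank2Positive (A s t) (A t s) r ∨ ∃ m < r,
      wordProd h2 (alternatingWord s t (m + 1)) = wordProd h2 (alternatingWord t s (m + 1)) := by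
  have hc := hneg s t hst
  have hd := hneg t s hst.symm
  by_cases h4 : 4 ≤ A s t * A t s
  · have hc0 : A s t ≠ 0 := fun h => by simp [h] at h4
    have hd0 : A t s ≠ 0 := fun h => by simp [h] at h4
    exact .inl (rank2Positive_of_four_le (by omega) (by omega) h4 r)
  obtain ⟨m, hm, hpos, hbs, hbt⟩ :=
    exists_rank2_braid hc hd ⟨hzero s t, hzero t s⟩ (not_le.mp h4)
  obtain ⟨m, rfl⟩ := Nat.exists_eq_add_one.mpr hm
  by_cases hr : r < m + 1
  · exact .inl (hpos r hr)
  · exact .inr ⟨m, by omega, wordProd_alternatingWord_comm h2 (by omega)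
      (by simpa using hbs) (by simpa using hbt)⟩

-- Trade the last `m + 1` letters for the other side of the braid relation, which ends in `s`.
lemma exists_wordProd_alternatingWord_mul_eq {s t : Fin n} {m r : ℕ} (hmr : m < r)
    (hbraid : wordProd h2 (alternatingWord s t (m + 1)) =
      wordProd h2 (alternatingWord t s (m + 1))) :
    ∃ l : List (Fin n), l.length + 1 = r ∧
      wordProd h2 (alternatingWord s t r) * σ s = wordProd h2 l := by
  obtain ⟨k, rfl⟩ : ∃ k, r = k + (m + 1) := ⟨r - (m + 1), by omega⟩
  obtain ⟨P, hP, hsplit⟩ : ∃ P : List (Fin n), P.length = k ∧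
      alternatingWord s t (k + (m + 1)) = P ++ alternatingWord s t (m + 1) := by
    refine ⟨(alternatingWord s t (k + (m + 1))).take k, by simp [length_alternatingWord], ?_⟩
    conv_lhs => rw [← List.take_append_drop k (alternatingWord s t _)]
    rw [drop_alternatingWord]
  refine ⟨P ++ alternatingWord s t m, by simp [hP, length_alternatingWord]; omega, ?_⟩
  rw [hsplit, wordProd_append, hbraid, alternatingWord_succ, wordProd_concat, wordProd_append,
    mul_assoc, mul_assoc, simpleReflection_mul_self, mul_one]

-- The factorization of `w` through the parabolic subgroup generated by `σ s, σ t`.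
lemma exists_alternatingWord_factorization {w : (Fin n → ℚ) ≃ₗ[ℚ] (Fin n → ℚ)}
    (hw : w ∈ weylGroup A) {t : Fin n} (ht : ℓ (w * σ t) < ℓ w) (s : Fin n) :
    ∃ v ∈ weylGroup A, ∃ r, 0 < r ∧ w = v * wordProd h2 (alternatingWord s t r) ∧
      ℓ v + r ≤ ℓ w ∧ ℓ v ≤ ℓ (v * σ s) ∧ ℓ v ≤ ℓ (v * σ t) := by
  classical
  let P : ℕ → Prop := fun r =>
    ∃ v ∈ weylGroup A, w = v * wordProd h2 (alternatingWord s t r) ∧ ℓ v + r ≤ ℓ w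
  have hP1 : P 1 := ⟨w * σ t, mul_mem hw (simpleReflection_mem_weylGroup h2 t),
    by simp [alternatingWord, mul_assoc], by omega⟩
  set r := Nat.findGreatest P (ℓ w)
  have hr : 1 ≤ r := Nat.le_findGreatest (by omega) hP1
  obtain ⟨v, hv, hwv, hlen⟩ : P r := Nat.findGreatest_spec (by omega) hP1
  have hmax : ¬P (r + 1) := fun h =>
    Nat.findGreatest_is_greatest (Nat.lt_succ_self r) (by obtain ⟨_, _, _, h⟩ := h; omega) h
  -- `v` cannot be shortened by the next letter, by maximality of `r` ...
  have hx : ℓ v ≤ ℓ (v * σ (if Even r then t else s)) := by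
    by_contra! hlt
    refine hmax ⟨v * σ (if Even r then t else s),
      mul_mem hv (simpleReflection_mem_weylGroup h2 _), ?_, by omega⟩
    rw [hwv, alternatingWord_succ', wordProd_cons, mul_assoc, ← mul_assoc (σ _),
      simpleReflection_mul_self, one_mul]
  -- ... nor by the first letter of the alternating word, since that word is reduced
  obtain ⟨r', hr'⟩ : ∃ r', r = r' + 1 := ⟨r - 1, by omega⟩
  have hy : ℓ v < ℓ (v * σ (if Even r' then t else s)) := by
    have hw' : w = v * σ (if Even r' then t else s) * wordProd h2 (alternatingWord s t r') := by
      rw [hwv, hr', alternatingWord_succ', wordProd_cons, mul_assoc]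
    have := weylLength_mul_wordProd_le h2
      (mul_mem hv (simpleReflection_mem_weylGroup h2 (if Even r' then t else s)))
      (alternatingWord s t r')
    rw [← hw', length_alternatingWord] at this
    omega
  refine ⟨v, hv, r, hr, hwv, hlen, ?_⟩
  simp only [hr', Nat.even_add_one] at hx
  by_cases he : Even r'
  · simp only [he, not_true, if_true, if_false] at hx hy
    exact ⟨hx, hy.le⟩
  · simp only [he, not_false_eq_true, if_true, if_false] at hx hy
    exact ⟨hy.le, hx⟩

lemma exists_rank2_reduction (hneg : ∀ i j, i ≠ j → A i j ≤ 0)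
    (hzero : ∀ i j, A i j = 0 → A j i = 0) {w : (Fin n → ℚ) ≃ₗ[ℚ] (Fin n → ℚ)}
    (hw : w ∈ weylGroup A) (h1 : w ≠ 1) {s : Fin n} (hs : ℓ w ≤ ℓ (w * σ s)) :
    ∃ t, t ≠ s ∧ ∃ v ∈ weylGroup A, ℓ v < ℓ w ∧ ℓ v ≤ ℓ (v * σ s) ∧ ℓ v ≤ ℓ (v * σ t) ∧
      ∃ a b : ℚ, 0 ≤ a ∧ 0 ≤ b ∧ (a = 0 → A s t = -1 ∧ A t s = -1) ∧
        w (Pi.single s 1) = a • v (Pi.single s 1) + b • v (Pi.single t 1) := by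
  obtain ⟨t, ht⟩ := exists_weylLength_mul_lt h2 hw h1
  have hts : t ≠ s := by rintro rfl; omega
  obtain ⟨v, hv, r, hr, hwv, hlen, hvs, hvt⟩ := exists_alternatingWord_factorization h2 hw ht s
  refine ⟨t, hts, v, hv, by omega, hvs, hvt, ?_⟩
  rcases rank2Positive_or_braid h2 hneg hzero hts.symm r with ⟨ha, hb, ha0⟩ | ⟨m, hmr, hbraid⟩
  · refine ⟨(rank2Coeffs (A s t) (A t s) r).1, (rank2Coeffs (A s t) (A t s) r).2,
      by exact_mod_cast ha, by exact_mod_cast hb, fun h => ha0 (by exact_mod_cast h), ?_⟩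
    rw [hwv, LinearEquiv.mul_apply, wordProd_alternatingWord_apply_single, map_add, map_smul,
      map_smul]
  · obtain ⟨l, hl, hws⟩ := exists_wordProd_alternatingWord_mul_eq h2 hmr hbraid
    have := weylLength_mul_wordProd_le h2 hv l
    rw [← hws, ← mul_assoc, ← hwv] at this
    omega

theorem nonneg_apply_single_of_weylLength_le (hneg : ∀ i j, i ≠ j → A i j ≤ 0)
    (hzero : ∀ i j, A i j = 0 → A j i = 0) {w : (Fin n → ℚ) ≃ₗ[ℚ] (Fin n → ℚ)}
    (hw : w ∈ weylGroup A) {s : Fin n} (hs : ℓ w ≤ ℓ (w * σ s)) : 0 ≤ w (Pi.single s 1) := by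
  induction hN : ℓ w using Nat.strong_induction_on generalizing w s with
  | _ N ih =>
  by_cases h1 : w = 1
  · subst h1
    exact Pi.single_nonneg.mpr zero_le_one
  obtain ⟨t, -, v, hv, hvw, hvs, hvt, a, b, ha, hb, -, hws⟩ :=
    exists_rank2_reduction h2 hneg hzero hw h1 hs
  rw [hws]
  exact add_nonneg (smul_nonneg ha (ih _ (hN ▸ hvw) hv hvs rfl))
    (smul_nonneg hb (ih _ (hN ▸ hvw) hv hvt rfl))

lemma simpleReflection_mul_simpleReflection_apply_single {i j : Fin n} (hij : A i j = -1)
    (hji : A j i = -1) : (σ j * σ i) (Pi.single j 1) = Pi.single i 1 := by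
  simp only [LinearEquiv.mul_apply, simpleReflection_single, map_sub, map_smul, hij, hji, h2]
  module

end WeylGroup

section Orbit

variable {n : ℕ} {A : Matrix (Fin n) (Fin n) ℤ}

lemma eq_of_apply_single_eq_smul (v : (Fin n → ℚ) ≃ₗ[ℚ] (Fin n → ℚ)) {j t : Fin n}
    {u : Fin n → ℚ} {x y : ℚ} (hj : v (Pi.single j 1) = x • u) (ht : v (Pi.single t 1) = y • u) :
    j = t := by
  by_contra hjt
  have h : v (y • Pi.single j 1 - x • Pi.single t 1) = 0 := by
    rw [map_sub, map_smul, map_smul, hj, ht, smul_smul, smul_smul, mul_comm, sub_self]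
  rw [LinearEquiv.map_eq_zero_iff] at h
  have hx : x = 0 := by simpa [Ne.symm hjt] using congrFun h t
  simp [hx] at hj

lemma eq_smul_single_of_add_eq_smul_single {X Y : Fin n → ℚ} (hX : 0 ≤ X) (hY : 0 ≤ Y)
    {a b c : ℚ} (ha : 0 < a) (hb : 0 ≤ b) {i : Fin n}
    (h : a • X + b • Y = c • Pi.single i 1) : X = X i • Pi.single i 1 := by
  funext k
  rcases eq_or_ne k i with rfl | hki
  · simp
  · have hk := congrFun h k
    simp only [Pi.add_apply, Pi.smul_apply, smul_eq_mul, Pi.single_eq_of_ne hki, mul_zero] at hk ⊢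
    have hXk : 0 ≤ X k := hX k
    have hYk : 0 ≤ Y k := hY k
    nlinarith [mul_nonneg ha.le hXk, mul_nonneg hb hYk]

theorem skeleton_reachable_of_apply_single_eq_smul (h2 : ∀ i, A i i = 2)
    (hneg : ∀ i j, i ≠ j → A i j ≤ 0) (hzero : ∀ i j, A i j = 0 → A j i = 0)
    {w : (Fin n → ℚ) ≃ₗ[ℚ] (Fin n → ℚ)}
    (hw : w ∈ weylGroup A) {i j : Fin n} {c : ℚ} (h : w (Pi.single j 1) = c • Pi.single i 1) :
    (skeleton A).Reachable j i := by
  induction hN : weylLength h2 w using Nat.strong_induction_on generalizing w j c with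
  | _ N ih =>
  by_cases h1 : w = 1
  · subst h1
    obtain rfl : j = i := eq_of_apply_single_eq_smul 1 h (one_smul ℚ _).symm
    rfl
  by_cases hj : weylLength h2 (w * simpleReflection h2 j) < weylLength h2 w
  · refine ih _ (hN ▸ hj) (mul_mem hw (simpleReflection_mem_weylGroup h2 j)) (c := -c) ?_ rfl
    rw [LinearEquiv.mul_apply, simpleReflection_single_self, map_neg, h, neg_smul]
  obtain ⟨t, htj, v, hv, hvw, hvj, hvt, a, b, ha, hb, hedge, hwj⟩ :=
    exists_rank2_reduction h2 hneg hzero hw h1 (not_lt.mp hj)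
  rw [h] at hwj
  have hc : c ≠ 0 := by rintro rfl; simp at h
  rcases ha.eq_or_lt with rfl | ha
  · obtain ⟨hjt, htj'⟩ := hedge rfl
    have hb : b ≠ 0 := by rintro rfl; simp [hc] at hwj
    have hvt : v (Pi.single t 1) = (b⁻¹ * c) • Pi.single i 1 := by
      rw [mul_smul, hwj, zero_smul, zero_add, inv_smul_smul₀ hb]
    have hadj : (skeleton A).Adj j t := ⟨htj.symm, hjt, htj'⟩
    exact hadj.reachable.trans (ih _ (hN ▸ hvw) hv hvt rfl)
  rcases hb.eq_or_lt with rfl | hb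
  · have hvj : v (Pi.single j 1) = (a⁻¹ * c) • Pi.single i 1 := by
      rw [mul_smul, hwj, zero_smul, add_zero, inv_smul_smul₀ ha.ne']
    exact ih _ (hN ▸ hvw) hv hvj rfl
  have hX := nonneg_apply_single_of_weylLength_le h2 hneg hzero hv hvj
  have hY := nonneg_apply_single_of_weylLength_le h2 hneg hzero hv hvt
  -- both `v (e j)` and `v (e t)` would lie on the line through `e i`
  exact absurd (eq_of_apply_single_eq_smul v
    (eq_smul_single_of_add_eq_smul_single hX hY ha hb.le hwj.symm)
    (eq_smul_single_of_add_eq_smul_single hY hX hb ha.le (by rw [add_comm]; exact hwj.symm)))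
    htj.symm

lemma exists_mem_weylGroup_apply_single_of_reachable (h2 : ∀ i, A i i = 2) {i j : Fin n}
    (h : (skeleton A).Reachable i j) : ∃ w ∈ weylGroup A, w (Pi.single j 1) = Pi.single i 1 := by
  obtain ⟨p⟩ := h
  induction p with
  | nil => exact ⟨1, one_mem _, rfl⟩
  | @cons u v _ huv _ ih =>
    obtain ⟨w, hw, hwv⟩ := ih
    refine ⟨simpleReflection h2 v * simpleReflection h2 u * w,
      mul_mem (mul_mem (simpleReflection_mem_weylGroup h2 v)
        (simpleReflection_mem_weylGroup h2 u)) hw, ?_⟩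
    rw [LinearEquiv.mul_apply, hwv,
      simpleReflection_mul_simpleReflection_apply_single h2 huv.2.1 huv.2.2]

end Orbit

theorem same_weylOrbit_iff_skeleton_reachable_general {n : ℕ} (A : Matrix (Fin n) (Fin n) ℤ)
    (hA : IsGCM A) (i j : Fin n) :
    (∃ w ∈ weylGroup A, w (Pi.single j 1) = (Pi.single i 1 : Fin n → ℚ)) ↔
      (skeleton A).Reachable i j := by
  obtain ⟨h2, hneg, hzero⟩ := hA
  refine ⟨fun ⟨w, hw, hwji⟩ => ?_, exists_mem_weylGroup_apply_single_of_reachable h2⟩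
  exact (skeleton_reachable_of_apply_single_eq_smul h2 hneg hzero hw
    (c := 1) (by rw [one_smul, hwji])).symm

/-- For `i ≠ j`, the simple roots `e i` and `e j` lie in the same Weyl group orbit iff
`i` and `j` are connected by a path of single edges, i.e. lie in the same connected
component of the simply laced skeleton. -/
theorem same_weylOrbit_iff_skeleton_reachable {n : ℕ} (A : Matrix (Fin n) (Fin n) ℤ)
    (hA : IsGCM A) (hsym : IsSymmetrizable A) (i j : Fin n) (hij : i ≠ j) :
    (∃ w ∈ weylGroup A, w (Pi.single j 1) = (Pi.single i 1 : Fin n → ℚ)) ↔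
      (skeleton A).Reachable i j :=
  same_weylOrbit_iff_skeleton_reachable_general A hA i j
end
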